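/- arXiv:1110.5689 — 8 statements merged into one kernel-verified Lean document; each statement's English description precedes it below -/
import Mathlib

section
/- Every real symmetric matrix A admits a symmetric best rank one approximation: there exists a unit vector v and scalar λ (an eigenvalue of A of maximal absolute value) such that ‖A − λ v vᵀ‖_F ≤ ‖A − s x yᵀ‖_F for all scalars s and unit vectors x, y. -/
/-!
For unit vectors `x`, `y` the Frobenius norm expands as
`‖A - s x yᵀ‖² = ‖A‖² - 2 s xᵀAy + s² ≥ ‖A‖² - (xᵀAy)²`.
Expanding `y` in an orthonormal eigenbasis gives `‖Ay‖ ≤ |λ|` for the eigenvalue `λ` of largest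
modulus, so `|xᵀAy| ≤ |λ|`; for a unit eigenvector `v` of `λ` the expansion is exactly
`‖A‖² - λ²`.
-/

noncomputable section

def frob {m k : ℕ} (A : Matrix (Fin m) (Fin k) ℝ) : ℝ :=
  Real.sqrt (∑ i, ∑ j, A i j ^ 2)

def uvec {m : ℕ} (v : Fin m → ℝ) : Prop := ∑ i, v i ^ 2 = 1

open Matrix WithLp

theorem LinearMap.IsSymmetric.norm_apply_le_of_orthonormalBasis_eigenvectors
    {𝕜 E ι : Type*} [RCLike 𝕜] [NormedAddCommGroup E] [InnerProductSpace 𝕜 E] [Fintype ι]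
    {T : E →ₗ[𝕜] E} (hT : T.IsSymmetric) (b : OrthonormalBasis ι 𝕜 E) {μ : ι → ℝ}
    (hb : ∀ i, T (b i) = (μ i : 𝕜) • b i) {c : ℝ} (hc₀ : 0 ≤ c) (hc : ∀ i, |μ i| ≤ c)
    (v : E) : ‖T v‖ ≤ c * ‖v‖ := by
  have hcoord : ∀ i, inner 𝕜 (b i) (T v) = μ i * inner 𝕜 (b i) v := fun i => by
    rw [← hT, hb, inner_smul_left, RCLike.conj_ofReal]
  rw [← sq_le_sq₀ (norm_nonneg _) (by positivity), ← b.sum_sq_norm_inner_right, mul_pow,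
    ← b.sum_sq_norm_inner_right, Finset.mul_sum]
  gcongr with i
  rw [hcoord, norm_mul, mul_pow, RCLike.norm_ofReal]
  gcongr
  exact hc i

theorem norm_toLp_eq_one_iff_uvec {m : ℕ} (x : Fin m → ℝ) :
    ‖(toLp 2 x : EuclideanSpace ℝ (Fin m))‖ = 1 ↔ uvec x := by
  rw [← pow_eq_one_iff_of_nonneg (norm_nonneg _) two_ne_zero, EuclideanSpace.real_norm_sq_eq]
  rfl

theorem uvec_iff_dotProduct_self {m : ℕ} (x : Fin m → ℝ) : uvec x ↔ x ⬝ᵥ x = 1 := by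
  simp only [uvec, dotProduct, sq]

theorem Matrix.IsHermitian.abs_dotProduct_mulVec_le {ι : Type*} [Fintype ι] [DecidableEq ι]
    {A : Matrix ι ι ℝ} (hA : A.IsHermitian) {c : ℝ} (hc₀ : 0 ≤ c)
    (hc : ∀ i, |hA.eigenvalues i| ≤ c) (x y : ι → ℝ) :
    |x ⬝ᵥ A *ᵥ y| ≤ c * ‖(toLp 2 x : EuclideanSpace ℝ ι)‖ * ‖(toLp 2 y : EuclideanSpace ℝ ι)‖ := by
  have hb : ∀ i, toEuclideanLin A (hA.eigenvectorBasis i) =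
      (hA.eigenvalues i : ℝ) • hA.eigenvectorBasis i := fun i =>
    congrArg (toLp 2) (hA.mulVec_eigenvectorBasis i)
  have hAy := (isSymmetric_toEuclideanLin_iff.mpr hA).norm_apply_le_of_orthonormalBasis_eigenvectors
    hA.eigenvectorBasis hb hc₀ hc (toLp 2 y)
  calc |x ⬝ᵥ A *ᵥ y|
        = |inner ℝ (toLp 2 x : EuclideanSpace ℝ ι) (toEuclideanLin A (toLp 2 y))| := by
        rw [EuclideanSpace.inner_toLp_toLp, star_trivial, dotProduct_comm]
        rfl
    _ ≤ _ := abs_real_inner_le_norm _ _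
    _ ≤ _ := by rw [mul_comm c, mul_assoc]; gcongr

theorem frob_sub_smul_vecMulVec_sq {m k : ℕ} (A : Matrix (Fin m) (Fin k) ℝ) (s : ℝ)
    {x : Fin m → ℝ} {y : Fin k → ℝ} (hx : uvec x) (hy : uvec y) :
    frob (A - s • vecMulVec x y) ^ 2 = frob A ^ 2 - 2 * s * (x ⬝ᵥ A *ᵥ y) + s ^ 2 := by
  have hsq : ∀ B : Matrix (Fin m) (Fin k) ℝ, frob B ^ 2 = ∑ i, ∑ j, B i j ^ 2 := fun B =>
    Real.sq_sqrt (by positivity)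
  have hentry : ∀ i j, (A - s • vecMulVec x y) i j ^ 2
      = A i j ^ 2 - 2 * s * (x i * (A i j * y j)) + s ^ 2 * (x i ^ 2 * y j ^ 2) := fun i j => by
    simp only [Matrix.sub_apply, Matrix.smul_apply, vecMulVec_apply, smul_eq_mul]; ring
  simp only [hsq, hentry, Finset.sum_add_distrib, Finset.sum_sub_distrib, ← Finset.mul_sum,
    ← Finset.sum_mul, dotProduct, mulVec]
  rw [hx, hy]
  ring

theorem frob_le_frob_iff_sq_le_sq {m k : ℕ} {A B : Matrix (Fin m) (Fin k) ℝ} :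
    frob A ≤ frob B ↔ frob A ^ 2 ≤ frob B ^ 2 :=
  (sq_le_sq₀ (Real.sqrt_nonneg _) (Real.sqrt_nonneg _)).symm

/-- Every real symmetric matrix admits a symmetric best rank one approximation `λ v vᵀ`,
where `λ` is an eigenvalue of `A` of maximal absolute value and `v` a unit eigenvector. -/
theorem stmt1 {n : ℕ} (A : Matrix (Fin (n + 1)) (Fin (n + 1)) ℝ) (hA : A.IsHermitian) :
    ∃ (lam : ℝ) (v : Fin (n + 1) → ℝ), uvec v ∧
      (∃ i, lam = hA.eigenvalues i) ∧ (∀ j, |hA.eigenvalues j| ≤ |lam|) ∧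
      A.mulVec v = lam • v ∧
      ∀ (s : ℝ) (x y : Fin (n + 1) → ℝ), uvec x → uvec y →
        frob (A - lam • Matrix.vecMulVec v v) ≤ frob (A - s • Matrix.vecMulVec x y) := by
  obtain ⟨i, hmax⟩ := Finite.exists_max fun j => |hA.eigenvalues j|
  set lam := hA.eigenvalues i
  set v : Fin (n + 1) → ℝ := ofLp (hA.eigenvectorBasis i)
  have hv : uvec v := (norm_toLp_eq_one_iff_uvec v).mp (hA.eigenvectorBasis.norm_eq_one i)
  have hAv : A *ᵥ v = lam • v := hA.mulVec_eigenvectorBasis i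
  refine ⟨lam, v, hv, ⟨i, rfl⟩, hmax, hAv, fun s x y hx hy => ?_⟩
  have hvAv : v ⬝ᵥ A *ᵥ v = lam := by
    rw [hAv, dotProduct_smul, (uvec_iff_dotProduct_self v).mp hv, smul_eq_mul, mul_one]
  have hxAy : |x ⬝ᵥ A *ᵥ y| ≤ |lam| := by
    simpa only [(norm_toLp_eq_one_iff_uvec _).mpr hx, (norm_toLp_eq_one_iff_uvec _).mpr hy,
      mul_one] using
      hA.abs_dotProduct_mulVec_le (abs_nonneg lam) hmax x y
  rw [frob_le_frob_iff_sq_le_sq, frob_sub_smul_vecMulVec_sq A lam hv hv,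
    frob_sub_smul_vecMulVec_sq A s hx hy, hvAv]
  linarith [sq_le_sq.mpr hxAy, sq_nonneg (s - x ⬝ᵥ A *ᵥ y)]
end
end

section
/- Let A be a real symmetric matrix with λ₁(A) = −λₙ(A) > 0. If u is a unit eigenvector of A² corresponding to λ₁(A)² that is not an eigenvector of A, and v := A u / ‖A u‖, then σ₁(A) u vᵀ is a best rank one approximation of A that is not symmetric. -/
noncomputable section

/-- `B` is a best rank one approximation of `A` in the Frobenius norm. -/
def IsBestRankOne {m : ℕ} (A B : Matrix (Fin m) (Fin m) ℝ) : Prop :=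
  (∃ (s : ℝ) (x y : Fin m → ℝ), uvec x ∧ uvec y ∧ B = s • Matrix.vecMulVec x y) ∧
  ∀ (s : ℝ) (x y : Fin m → ℝ), uvec x → uvec y →
    frob (A - B) ≤ frob (A - s • Matrix.vecMulVec x y)

/-- The largest singular value of a real matrix `A`: the square root of the largest
eigenvalue of `AᵀA = AᴴA`. -/
def sigma1 {m : ℕ} (A : Matrix (Fin m) (Fin m) ℝ) : ℝ :=
  Real.sqrt (⨆ i, (Matrix.isHermitian_conjTranspose_mul_self A).eigenvalues i)

/-!
The spectrum of `A` lies in `[-λ₁, λ₁]` and contains `λ₁`. By the spectral mapping theorem the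
spectrum of `AᵀA = A²` consists of the squares, so `σ₁(A) = λ₁`, and by functional calculus
`λ₁² - A²` is positive semidefinite, i.e. `‖A y‖ ≤ λ₁ ‖y‖`; with Cauchy–Schwarz, `|xᵀ A y| ≤ λ₁`
for unit `x`, `y`. Expanding the Frobenius norm, `‖A - s x yᵀ‖² = ‖A‖² - 2 s xᵀ A y + s²` is at
least `‖A‖² - λ₁²`, and this value is attained at `λ₁ u vᵀ` because `A v = λ₁ u`. Finally `u vᵀ`
is symmetric only if `A u` is parallel to `u`.
-/

open Matrix
open scoped MatrixOrder

lemma sum_sq_eq_dotProduct_self {ι : Type*} [Fintype ι] (x : ι → ℝ) :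
    ∑ i, x i ^ 2 = x ⬝ᵥ x := by
  simp only [dotProduct, sq]

lemma uvec_iff {m : ℕ} {x : Fin m → ℝ} : uvec x ↔ x ⬝ᵥ x = 1 := by
  rw [uvec, sum_sq_eq_dotProduct_self]

lemma sum_sq_sub_smul_vecMulVec {m k : Type*} [Fintype m] [Fintype k] (A : Matrix m k ℝ)
    (s : ℝ) (x : m → ℝ) (y : k → ℝ) :
    ∑ i, ∑ j, (A - s • vecMulVec x y) i j ^ 2
      = ∑ i, ∑ j, A i j ^ 2 - 2 * s * (x ⬝ᵥ A *ᵥ y) + s ^ 2 * ((x ⬝ᵥ x) * (y ⬝ᵥ y)) := by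
  simp only [dotProduct, mulVec]
  rw [Finset.sum_mul_sum]
  simp only [Finset.mul_sum, ← Finset.sum_sub_distrib, ← Finset.sum_add_distrib]
  refine Finset.sum_congr rfl fun i _ => Finset.sum_congr rfl fun j _ => ?_
  simp only [Matrix.sub_apply, Matrix.smul_apply, vecMulVec_apply, smul_eq_mul]
  ring

lemma isBestRankOne_of_sq_le {m : ℕ} {A : Matrix (Fin m) (Fin m) ℝ} {u v : Fin m → ℝ}
    (hu : uvec u) (hv : uvec v)
    (hmax : ∀ x y, uvec x → uvec y → (x ⬝ᵥ A *ᵥ y) ^ 2 ≤ (u ⬝ᵥ A *ᵥ v) ^ 2) :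
    IsBestRankOne A ((u ⬝ᵥ A *ᵥ v) • vecMulVec u v) := by
  refine ⟨⟨_, u, v, hu, hv, rfl⟩, fun s x y hx hy => Real.sqrt_le_sqrt ?_⟩
  have hb := hmax x y hx hy
  rw [uvec_iff] at hu hv hx hy
  rw [sum_sq_sub_smul_vecMulVec, sum_sq_sub_smul_vecMulVec, hu, hv, hx, hy]
  nlinarith [sq_nonneg (s - x ⬝ᵥ A *ᵥ y)]

section Symmetric

variable {n : Type*} [Fintype n] {A : Matrix n n ℝ}

lemma Matrix.IsHermitian.mulVec_dotProduct_mulVec (hA : A.IsHermitian) (x y : n → ℝ) :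
    A *ᵥ x ⬝ᵥ A *ᵥ y = x ⬝ᵥ (A * A) *ᵥ y := by
  rw [← mulVec_mulVec, dotProduct_mulVec x A, ← mulVec_transpose,
    ← conjTranspose_eq_transpose_of_trivial, hA.eq]

lemma Matrix.IsHermitian.spectrum_mul_self [DecidableEq n] (hA : A.IsHermitian) :
    spectrum ℝ (A * A) = (· ^ 2) '' spectrum ℝ A := by
  rw [← sq, ← cfc_pow_id (R := ℝ) A 2 hA.isSelfAdjoint, cfc_map_spectrum _ _ hA.isSelfAdjoint]

lemma Matrix.IsHermitian.posSemidef_sq_smul_one_sub_mul_self [DecidableEq n] (hA : A.IsHermitian)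
    {l : ℝ} (hl : ∀ x ∈ spectrum ℝ A, |x| ≤ l) : (l ^ 2 • 1 - A * A).PosSemidef := by
  have hcfc : cfc (fun x : ℝ => l ^ 2 - x ^ 2) A = l ^ 2 • 1 - A * A := by
    rw [cfc_sub _ _ A, cfc_const _ A hA.isSelfAdjoint, cfc_pow_id (R := ℝ) A 2 hA.isSelfAdjoint,
      Algebra.algebraMap_eq_smul_one, sq A]
  rw [← hcfc, ← nonneg_iff_posSemidef]
  refine cfc_nonneg fun x hx => ?_
  obtain ⟨hlo, hhi⟩ := abs_le.mp (hl x hx)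
  exact sub_nonneg.mpr (sq_le_sq' hlo hhi)

lemma Matrix.IsHermitian.dotProduct_mulVec_sq_le [DecidableEq n] (hA : A.IsHermitian) {l : ℝ}
    (hl : ∀ x ∈ spectrum ℝ A, |x| ≤ l) (x y : n → ℝ) :
    (x ⬝ᵥ A *ᵥ y) ^ 2 ≤ l ^ 2 * (x ⬝ᵥ x) * (y ⬝ᵥ y) := by
  have hcs : (x ⬝ᵥ A *ᵥ y) ^ 2 ≤ (x ⬝ᵥ x) * (A *ᵥ y ⬝ᵥ A *ᵥ y) := by
    have h := Finset.sum_mul_sq_le_sq_mul_sq Finset.univ x (A *ᵥ y)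
    rwa [sum_sq_eq_dotProduct_self, sum_sq_eq_dotProduct_self] at h
  have hpsd := (hA.posSemidef_sq_smul_one_sub_mul_self hl).dotProduct_mulVec_nonneg y
  simp only [sub_mulVec, smul_mulVec, one_mulVec, dotProduct_sub, dotProduct_smul, star_trivial,
    smul_eq_mul, sub_nonneg] at hpsd
  rw [hA.mulVec_dotProduct_mulVec] at hcs
  have hx : 0 ≤ x ⬝ᵥ x := by rw [← sum_sq_eq_dotProduct_self]; positivity
  nlinarith [mul_le_mul_of_nonneg_left hpsd hx]

lemma Matrix.IsHermitian.isGreatest_abs_spectrum_iSup_eigenvalues [DecidableEq n] [Nonempty n]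
    (hA : A.IsHermitian) (h : (⨆ i, hA.eigenvalues i) = -(⨅ i, hA.eigenvalues i)) :
    IsGreatest ((|·|) '' spectrum ℝ A) (⨆ i, hA.eigenvalues i) := by
  have habs : ∀ i, |hA.eigenvalues i| ≤ ⨆ i, hA.eigenvalues i := fun i => by
    refine abs_le.mpr ⟨?_, le_ciSup (Set.finite_range _).bddAbove i⟩
    rw [h, neg_neg]
    exact ciInf_le (Set.finite_range _).bddBelow i
  obtain ⟨i, hi⟩ := exists_eq_ciSup_of_finite (f := hA.eigenvalues)
  rw [hA.spectrum_real_eq_range_eigenvalues]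
  refine ⟨⟨_, ⟨i, hi⟩, abs_of_nonneg ((abs_nonneg _).trans (habs i))⟩, ?_⟩
  rintro _ ⟨_, ⟨j, rfl⟩, rfl⟩
  exact habs j

end Symmetric

lemma exists_smul_eq_of_isSymm_vecMulVec {n K : Type*} [Field K] {u w : n → K}
    (h : (vecMulVec u w).IsSymm) (hu : u ≠ 0) : ∃ μ : K, w = μ • u := by
  obtain ⟨j, hj⟩ : ∃ j, u j ≠ 0 := Function.ne_iff.mp hu
  refine ⟨w j / u j, funext fun i => ?_⟩
  have hij : u j * w i = u i * w j := by simpa [vecMulVec_apply] using congrFun (congrFun h i) j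
  simp only [Pi.smul_apply, smul_eq_mul]
  field_simp
  linear_combination hij

lemma sigma1_eq_of_isGreatest {m : ℕ} {A : Matrix (Fin m) (Fin m) ℝ} (hA : A.IsHermitian) {l : ℝ}
    (hl : IsGreatest ((|·|) '' spectrum ℝ A) l) : sigma1 A = l := by
  have hsq : IsGreatest (spectrum ℝ (Aᴴ * A)) (l ^ 2) := by
    rw [hA.eq, hA.spectrum_mul_self]
    obtain ⟨⟨x, hx, rfl⟩, hle⟩ := hl
    refine ⟨⟨x, hx, (sq_abs x).symm⟩, ?_⟩
    rintro _ ⟨y, hy, rfl⟩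
    show y ^ 2 ≤ |x| ^ 2
    rw [← sq_abs y]
    exact pow_le_pow_left₀ (abs_nonneg y) (hle ⟨y, hy, rfl⟩) 2
  obtain ⟨⟨x, -, rfl⟩, -⟩ := hl
  rw [sigma1, ← sSup_range,
    ← (isHermitian_conjTranspose_mul_self A).spectrum_real_eq_range_eigenvalues, hsq.csSup_eq,
    Real.sqrt_sq (abs_nonneg x)]

/-- Let `A` be real symmetric with `λ₁(A) = -λₙ(A) > 0`.  If `u` is a unit eigenvector of
`A²` for the eigenvalue `λ₁(A)²` which is not an eigenvector of `A`, and
`v = A u / ‖A u‖`, then `σ₁(A) u vᵀ` is a nonsymmetric best rank one approximation of `A`. -/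
theorem stmt3 {n : ℕ} (A : Matrix (Fin (n + 1)) (Fin (n + 1)) ℝ) (hA : A.IsHermitian)
    (hlam : (⨆ i, hA.eigenvalues i) = -(⨅ i, hA.eigenvalues i))
    (hpos : 0 < ⨆ i, hA.eigenvalues i)
    (u : Fin (n + 1) → ℝ) (hu : uvec u)
    (heig : (A * A).mulVec u = ((⨆ i, hA.eigenvalues i) ^ 2) • u)
    (hnot : ¬ ∃ μ : ℝ, A.mulVec u = μ • u) :
    IsBestRankOne A
        (sigma1 A •
          Matrix.vecMulVec u ((Real.sqrt (∑ i, A.mulVec u i ^ 2))⁻¹ • A.mulVec u)) ∧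
      ¬ (sigma1 A •
          Matrix.vecMulVec u ((Real.sqrt (∑ i, A.mulVec u i ^ 2))⁻¹ • A.mulVec u)).IsSymm := by
  set l := ⨆ i, hA.eigenvalues i
  have hspec := hA.isGreatest_abs_spectrum_iSup_eigenvalues hlam
  have hbound := hA.dotProduct_mulVec_sq_le fun x hx => hspec.2 ⟨x, hx, rfl⟩
  rw [uvec_iff] at hu
  have hAu : A *ᵥ u ⬝ᵥ A *ᵥ u = l ^ 2 := by
    rw [hA.mulVec_dotProduct_mulVec, heig, dotProduct_smul, hu, smul_eq_mul, mul_one]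
  have hnorm : Real.sqrt (∑ i, (A *ᵥ u) i ^ 2) = l := by
    rw [sum_sq_eq_dotProduct_self, hAu, Real.sqrt_sq hpos.le]
  rw [hnorm, sigma1_eq_of_isGreatest hA hspec]
  set v := l⁻¹ • A *ᵥ u
  have hv : v ⬝ᵥ v = 1 := by
    rw [dotProduct_smul, smul_dotProduct, hAu, smul_eq_mul, smul_eq_mul]
    field_simp
  have huv : u ⬝ᵥ A *ᵥ v = l := by
    rw [mulVec_smul, dotProduct_smul, mulVec_mulVec, ← hA.mulVec_dotProduct_mulVec, hAu,
      smul_eq_mul]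
    field_simp
  constructor
  · have hmax : ∀ x y, uvec x → uvec y → (x ⬝ᵥ A *ᵥ y) ^ 2 ≤ (u ⬝ᵥ A *ᵥ v) ^ 2 := by
      intro x y hx hy
      rw [uvec_iff] at hx hy
      simpa [hx, hy, huv] using hbound x y
    simpa only [huv] using isBestRankOne_of_sq_le (uvec_iff.mpr hu) (uvec_iff.mpr hv) hmax
  · intro hsymm
    have hlv : l • v = A *ᵥ u := by simp [v, smul_smul, hpos.ne']
    rw [← vecMulVec_smul, hlv] at hsymm
    exact hnot (exists_smul_eq_of_isSymm_vecMulVec hsymm fun h0 => by simp [h0] at hu)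
end
end

section
/- If a·(u₁⊗…⊗u_d) is a best rank one approximation of a nonzero tensor T ∈ ℝ^{n₁×…×n_d}, then for each i ∈ [d] the contraction T × ⊗_{j≠i} u_j equals λ u_i, where λ = ⟨T, u₁⊗…⊗u_d⟩ satisfies |λ| = ‖T‖_{∞,2}. -/
noncomputable section

/-- The decomposable tensor `x₁ ⊗ ⋯ ⊗ x_d`, as a multi-indexed array. -/
def dtens {ι : Type*} [Fintype ι] {n : ι → ℕ} (x : ∀ j, Fin (n j) → ℝ) :
    (∀ j, Fin (n j)) → ℝ :=
  fun idx => ∏ j, x j (idx j)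

/-- Entrywise inner product of tensors. -/
def tinner {ι : Type*} [Fintype ι] [DecidableEq ι] {n : ι → ℕ}
    (S T : (∀ j, Fin (n j)) → ℝ) : ℝ :=
  ∑ idx, S idx * T idx

/-- Hilbert–Schmidt norm of a tensor. -/
def hsNorm {ι : Type*} [Fintype ι] [DecidableEq ι] {n : ι → ℕ}
    (T : (∀ j, Fin (n j)) → ℝ) : ℝ :=
  Real.sqrt (∑ idx, T idx ^ 2)

/-- `v` is a unit vector in `ℝ^m`. -/
def isUnitVec {m : ℕ} (v : Fin m → ℝ) : Prop := ∑ i, v i ^ 2 = 1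

/-- The spectral (`(∞,2)`-Schatten) norm of a tensor: the supremum of
`|⟨T, x₁ ⊗ ⋯ ⊗ x_d⟩|` over unit vectors `x_j`. -/
def specNorm {ι : Type*} [Fintype ι] [DecidableEq ι] {n : ι → ℕ}
    (T : (∀ j, Fin (n j)) → ℝ) : ℝ :=
  sSup {r | ∃ x : ∀ j, Fin (n j) → ℝ, (∀ j, isUnitVec (x j)) ∧ r = |tinner T (dtens x)|}

/-- The contraction `T × ⊗_{j ≠ i} u_j ∈ ℝ^{n_i}`. -/
def contrAt {d : ℕ} {n : Fin d → ℕ} (T : (∀ j, Fin (n j)) → ℝ)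
    (u : ∀ j, Fin (n j) → ℝ) (i : Fin d) : Fin (n i) → ℝ :=
  fun k => ∑ idx : ∀ j, Fin (n j),
    if idx i = k then T idx * ∏ j ∈ Finset.univ.erase i, u j (idx j) else 0

/-! For unit vectors `x_j`, `‖T - s · x₁ ⊗ ⋯ ⊗ x_d‖² = ‖T‖² - 2s⟨T, x⟩ + s²`, which is minimal at
`s = ⟨T, x⟩` with value `‖T‖² - ⟨T, x⟩²`. Hence a best rank one approximation has `a = λ` and
maximises `|⟨T, x₁ ⊗ ⋯ ⊗ x_d⟩|`, which gives `|λ| = ‖T‖_{∞,2}`. Varying only `u_i` shows that the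
contraction `c = T × ⊗_{j≠i} u_j` has `‖c‖ ≤ |λ|` while `⟨c, u_i⟩ = λ`, so `‖c - λ u_i‖² ≤ 0`. -/

lemma sum_sq_dtens {ι : Type*} [Fintype ι] [DecidableEq ι] {n : ι → ℕ}
    {x : ∀ j, Fin (n j) → ℝ} (hx : ∀ j, isUnitVec (x j)) : ∑ idx, dtens x idx ^ 2 = 1 := by
  simp_rw [dtens, ← Finset.prod_pow]
  rw [← Fintype.piFinset_univ, ← Finset.prod_univ_sum (f := fun j k => x j k ^ 2)]
  exact Finset.prod_eq_one fun j _ => hx j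

lemma sum_sq_sub_smul_dtens {ι : Type*} [Fintype ι] [DecidableEq ι] {n : ι → ℕ}
    (T : (∀ j, Fin (n j)) → ℝ) (s : ℝ) {x : ∀ j, Fin (n j) → ℝ} (hx : ∀ j, isUnitVec (x j)) :
    ∑ idx, (T - s • dtens x) idx ^ 2 = ∑ idx, T idx ^ 2 - 2 * s * tinner T (dtens x) + s ^ 2 := by
  have hexpand : ∀ idx, (T - s • dtens x) idx ^ 2
      = T idx ^ 2 - 2 * s * (T idx * dtens x idx) + s ^ 2 * dtens x idx ^ 2 := fun idx => by
    simp only [Pi.sub_apply, Pi.smul_apply, smul_eq_mul]; ring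
  simp_rw [hexpand]
  rw [Finset.sum_add_distrib, Finset.sum_sub_distrib, ← Finset.mul_sum, ← Finset.mul_sum,
    sum_sq_dtens hx, tinner, mul_one]

lemma hsNorm_le_hsNorm_iff {ι : Type*} [Fintype ι] [DecidableEq ι] {n : ι → ℕ}
    (S T : (∀ j, Fin (n j)) → ℝ) : hsNorm S ≤ hsNorm T ↔ ∑ idx, S idx ^ 2 ≤ ∑ idx, T idx ^ 2 :=
  Real.sqrt_le_sqrt_iff (Finset.sum_nonneg fun _ _ => sq_nonneg _)

lemma tinner_dtens_update {d : ℕ} {n : Fin d → ℕ} (T : (∀ j, Fin (n j)) → ℝ)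
    (u : ∀ j, Fin (n j) → ℝ) (i : Fin d) (w : Fin (n i) → ℝ) :
    tinner T (dtens (Function.update u i w)) = ∑ k, contrAt T u i k * w k := by
  have hprod : ∀ idx : ∀ j, Fin (n j), ∏ j, Function.update u i w j (idx j)
      = w (idx i) * ∏ j ∈ Finset.univ.erase i, u j (idx j) := fun idx => by
    rw [← Finset.mul_prod_erase Finset.univ _ (Finset.mem_univ i), Function.update_self]
    exact congrArg _ <| Finset.prod_congr rfl fun j hj => by
      rw [Function.update_of_ne (Finset.ne_of_mem_erase hj)]
  simp_rw [tinner, dtens, contrAt, hprod, Finset.sum_mul, ite_mul, zero_mul]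
  rw [Finset.sum_comm]
  refine Finset.sum_congr rfl fun idx _ => ?_
  rw [Finset.sum_ite_eq, if_pos (Finset.mem_univ _)]
  ring

lemma isUnitVec_update {d : ℕ} {n : Fin d → ℕ} {u : ∀ j, Fin (n j) → ℝ}
    (hu : ∀ j, isUnitVec (u j)) (i : Fin d) {w : Fin (n i) → ℝ} (hw : isUnitVec w) :
    ∀ j, isUnitVec (Function.update u i w j) := by
  intro j
  rcases eq_or_ne j i with rfl | hji
  · rwa [Function.update_self]
  · rw [Function.update_of_ne hji]; exact hu j

/-- Dual description of the Euclidean norm, tested against the unit vector `c / ‖c‖`. -/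
lemma sum_sq_le_sq_of_forall_isUnitVec {m : ℕ} {c : Fin m → ℝ} {r : ℝ}
    (hc : ∀ w, isUnitVec w → |∑ k, c k * w k| ≤ r) : ∑ k, c k ^ 2 ≤ r ^ 2 := by
  set s := ∑ k, c k ^ 2
  have hs0 : 0 ≤ s := Finset.sum_nonneg fun _ _ => sq_nonneg _
  rcases hs0.eq_or_lt with hs | hs
  · rw [← hs]; exact sq_nonneg r
  have hw : isUnitVec fun k => c k / √s := by
    simp_rw [isUnitVec, div_pow, ← Finset.sum_div, Real.sq_sqrt hs0]
    exact div_self hs.ne'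
  have hcw : ∑ k, c k * (c k / √s) = √s := by
    simp_rw [mul_div_assoc', ← sq, ← Finset.sum_div]
    exact Real.div_sqrt
  have h := hc _ hw
  rw [hcw, abs_of_nonneg (Real.sqrt_nonneg _)] at h
  calc s = √s ^ 2 := (Real.sq_sqrt hs0).symm
    _ ≤ r ^ 2 := pow_le_pow_left₀ (Real.sqrt_nonneg _) h 2

/-- Equality case of Cauchy–Schwarz: `‖c - r u‖² = ‖c‖² - 2r⟨c, u⟩ + r² ≤ 0`. -/
lemma eq_smul_of_sum_sq_le {ι : Type*} [Fintype ι] {c u : ι → ℝ} {r : ℝ}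
    (hu : ∑ k, u k ^ 2 = 1) (hcu : ∑ k, c k * u k = r) (hc : ∑ k, c k ^ 2 ≤ r ^ 2) :
    c = r • u := by
  have hexpand : ∀ k, (c k - r * u k) ^ 2 = c k ^ 2 - 2 * r * (c k * u k) + r ^ 2 * u k ^ 2 :=
    fun k => by ring
  have hsum : ∑ k, (c k - r * u k) ^ 2 = 0 := by
    refine le_antisymm ?_ (Finset.sum_nonneg fun _ _ => sq_nonneg _)
    simp_rw [hexpand]
    rw [Finset.sum_add_distrib, Finset.sum_sub_distrib, ← Finset.mul_sum, ← Finset.mul_sum, hu,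
      hcu]
    linarith
  funext k
  have hk := (Finset.sum_eq_zero_iff_of_nonneg fun _ _ => sq_nonneg _).mp hsum k
    (Finset.mem_univ k)
  simpa [sub_eq_zero] using hk

section BestRankOne

variable {ι : Type*} [Fintype ι] [DecidableEq ι] {n : ι → ℕ} {T : (∀ j, Fin (n j)) → ℝ}
  {a : ℝ} {u : ∀ j, Fin (n j) → ℝ}

def IsBestRankOneApprox (T : (∀ j, Fin (n j)) → ℝ) (a : ℝ) (u : ∀ j, Fin (n j) → ℝ) : Prop :=
  ∀ (s : ℝ) (x : ∀ j, Fin (n j) → ℝ), (∀ j, isUnitVec (x j)) →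
    hsNorm (T - a • dtens u) ≤ hsNorm (T - s • dtens x)

lemma IsBestRankOneApprox.sq_sub_two_mul_tinner_le (hu : ∀ j, isUnitVec (u j))
    (hbest : IsBestRankOneApprox T a u)
    (s : ℝ) {x : ∀ j, Fin (n j) → ℝ} (hx : ∀ j, isUnitVec (x j)) :
    a ^ 2 - 2 * a * tinner T (dtens u) ≤ s ^ 2 - 2 * s * tinner T (dtens x) := by
  have h := (hsNorm_le_hsNorm_iff _ _).mp (hbest s x hx)
  rw [sum_sq_sub_smul_dtens T a hu, sum_sq_sub_smul_dtens T s hx] at h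
  linarith

lemma IsBestRankOneApprox.coeff_eq_tinner (hu : ∀ j, isUnitVec (u j))
    (hbest : IsBestRankOneApprox T a u) :
    a = tinner T (dtens u) := by
  have h := hbest.sq_sub_two_mul_tinner_le hu (tinner T (dtens u)) hu
  nlinarith [sq_nonneg (a - tinner T (dtens u))]

lemma IsBestRankOneApprox.abs_tinner_le (hu : ∀ j, isUnitVec (u j))
    (hbest : IsBestRankOneApprox T a u)
    {x : ∀ j, Fin (n j) → ℝ} (hx : ∀ j, isUnitVec (x j)) :
    |tinner T (dtens x)| ≤ |tinner T (dtens u)| := by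
  have h := hbest.sq_sub_two_mul_tinner_le hu (tinner T (dtens x)) hx
  rw [hbest.coeff_eq_tinner hu] at h
  exact sq_le_sq.mp (by linarith)

end BestRankOne

lemma specNorm_eq_of_forall_le {ι : Type*} [Fintype ι] [DecidableEq ι] {n : ι → ℕ}
    {T : (∀ j, Fin (n j)) → ℝ} {u : ∀ j, Fin (n j) → ℝ} (hu : ∀ j, isUnitVec (u j))
    (hmax : ∀ x : ∀ j, Fin (n j) → ℝ, (∀ j, isUnitVec (x j)) →
      |tinner T (dtens x)| ≤ |tinner T (dtens u)|) :
    specNorm T = |tinner T (dtens u)| := by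
  have hub : ∀ r ∈ {r | ∃ x : ∀ j, Fin (n j) → ℝ, (∀ j, isUnitVec (x j)) ∧
      r = |tinner T (dtens x)|}, r ≤ |tinner T (dtens u)| := by
    rintro r ⟨x, hx, rfl⟩
    exact hmax x hx
  exact le_antisymm (Real.sSup_le hub (abs_nonneg _)) (le_csSup ⟨_, hub⟩ ⟨u, hu, rfl⟩)

theorem stmt5_general {d : ℕ} {n : Fin d → ℕ}
    (T : (∀ j, Fin (n j)) → ℝ)
    (a : ℝ) (u : ∀ j, Fin (n j) → ℝ) (hu : ∀ j, isUnitVec (u j))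
    (hbest : ∀ (s : ℝ) (x : ∀ j, Fin (n j) → ℝ), (∀ j, isUnitVec (x j)) →
      hsNorm (T - a • dtens u) ≤ hsNorm (T - s • dtens x)) :
    (∀ i, contrAt T u i = tinner T (dtens u) • u i) ∧
      |tinner T (dtens u)| = specNorm T := by
  have hmax := fun x => IsBestRankOneApprox.abs_tinner_le hu hbest (x := x)
  refine ⟨fun i => ?_, (specNorm_eq_of_forall_le hu hmax).symm⟩
  have hcu : ∑ k, contrAt T u i k * u i k = tinner T (dtens u) := by
    rw [← tinner_dtens_update, Function.update_eq_self]
  have hc : ∑ k, contrAt T u i k ^ 2 ≤ |tinner T (dtens u)| ^ 2 :=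
    sum_sq_le_sq_of_forall_isUnitVec fun w hw => by
      simpa only [tinner_dtens_update] using hmax _ (isUnitVec_update hu i hw)
  exact eq_smul_of_sum_sq_le (hu i) hcu (by rwa [sq_abs] at hc)

/-- If `a · u₁ ⊗ ⋯ ⊗ u_d` is a best rank one approximation of the nonzero tensor `T`,
then for each mode `i` the contraction `T × ⊗_{j ≠ i} u_j` equals `λ u_i`, where
`λ = ⟨T, u₁ ⊗ ⋯ ⊗ u_d⟩` satisfies `|λ| = ‖T‖_{∞,2}`. -/
theorem stmt5 {d : ℕ} {n : Fin d → ℕ} (hn : ∀ j, 0 < n j)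
    (T : (∀ j, Fin (n j)) → ℝ) (hT : T ≠ 0)
    (a : ℝ) (u : ∀ j, Fin (n j) → ℝ) (hu : ∀ j, isUnitVec (u j))
    (hbest : ∀ (s : ℝ) (x : ∀ j, Fin (n j) → ℝ), (∀ j, isUnitVec (x j)) →
      hsNorm (T - a • dtens u) ≤ hsNorm (T - s • dtens x)) :
    (∀ i, contrAt T u i = tinner T (dtens u) • u i) ∧
      |tinner T (dtens u)| = specNorm T :=
  stmt5_general T a u hu hbest
end
end

section
/- Let T ∈ Sym(n,d) be a symmetric d-tensor and a·(u₁⊗…⊗u_d) a best rank one approximation of T. Then for every permutation σ of [d], the tensor a·(u_{σ(1)}⊗…⊗u_{σ(d)}) is also a best rank one approximation of T. In particular, if T has a unique best rank one approximation, then that approximation is symmetric. -/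
noncomputable section

/-
The error of a rank one approximation is unchanged if the factors are permuted and the indices
of `T` are permuted accordingly; for symmetric `T` the latter does nothing, so `a · u ∘ σ` is as
good as `a · u`. If the best approximation is unique and `a ≠ 0`, `u₁ ⊗ ⋯ ⊗ u_d` is invariant
under every transposition `(i k)`. Comparing the entries at `b[k ↦ q]` and at its transpose
`b[i ↦ q, k ↦ b i]`, for a base index `b` with all `u_l (b_l) ≠ 0`, shows
`u_k q · u_i (b_i) = u_k (b_i) · u_i q`, so every factor is a multiple of `u_i`.
-/

theorem isUnitVec.exists_ne_zero {m : ℕ} {v : Fin m → ℝ} (hv : isUnitVec v) : ∃ i, v i ≠ 0 := by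
  by_contra! h
  simp [isUnitVec, h] at hv

section

variable {ι : Type*} [Fintype ι]

theorem dtens_update_mul [DecidableEq ι] {n : ι → ℕ} (x : ∀ j, Fin (n j) → ℝ)
    (idx : ∀ j, Fin (n j)) (k : ι) (q : Fin (n k)) :
    dtens x (Function.update idx k q) * x k (idx k) = x k q * dtens x idx := by
  simp only [dtens]
  rw [← Finset.mul_prod_erase _ _ (Finset.mem_univ k),
    ← Finset.mul_prod_erase _ (fun l => x l (idx l)) (Finset.mem_univ k), Function.update_self,
    Finset.prod_congr rfl fun l hl => by rw [Function.update_of_ne (Finset.ne_of_mem_erase hl)]]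
  ring

theorem dtens_comp_perm_apply {n : ℕ} (x : ι → Fin n → ℝ) (σ : Equiv.Perm ι) (idx : ι → Fin n) :
    dtens (x ∘ σ) idx = dtens x (idx ∘ σ.symm) := by
  simp only [dtens, Function.comp_apply]
  rw [← Equiv.prod_comp σ fun j => x j (idx (σ.symm j))]
  simp only [Equiv.symm_apply_apply]

theorem hsNorm_comp_perm [DecidableEq ι] {n : ℕ} (S : (ι → Fin n) → ℝ) (σ : Equiv.Perm ι) :
    hsNorm (fun idx => S (idx ∘ σ)) = hsNorm S := by
  simp only [hsNorm]
  congr 1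
  exact Equiv.sum_comp (σ.symm.arrowCongr (Equiv.refl _)) fun idx => S idx ^ 2

theorem hsNorm_sub_smul_dtens_comp_perm [DecidableEq ι] {n : ℕ} {T : (ι → Fin n) → ℝ}
    (hT : ∀ (σ : Equiv.Perm ι) (idx : ι → Fin n), T (idx ∘ σ) = T idx)
    (a : ℝ) (x : ι → Fin n → ℝ) (σ : Equiv.Perm ι) :
    hsNorm (T - a • dtens (x ∘ σ)) = hsNorm (T - a • dtens x) := by
  have hshift : T - a • dtens (x ∘ σ) = fun idx => (T - a • dtens x) (idx ∘ σ.symm) := by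
    funext idx
    simp only [Pi.sub_apply, Pi.smul_apply, hT, dtens_comp_perm_apply]
  rw [hshift, hsNorm_comp_perm]

theorem mul_eq_mul_of_dtens_swap_invariant [DecidableEq ι] {n : ℕ} {x : ι → Fin n → ℝ}
    {b : ι → Fin n} (hb : ∀ l, x l (b l) ≠ 0) {i k : ι}
    (hswap : ∀ idx, dtens x (idx ∘ Equiv.swap i k) = dtens x idx) (q : Fin n) :
    x k q * x i (b i) = x k (b i) * x i q := by
  rcases eq_or_ne k i with rfl | hki
  · ring
  have hb0 : dtens x b ≠ 0 := Finset.prod_ne_zero_iff.2 fun l _ => hb l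
  have htransp : Function.update b k q ∘ Equiv.swap i k =
      Function.update (Function.update b i q) k (b i) := by
    funext l
    simp only [Function.comp_apply, Function.update_apply, Equiv.swap_apply_def]
    split_ifs <;> simp_all
  have hupd := dtens_update_mul x (Function.update b i q) k (b i)
  rw [Function.update_of_ne hki] at hupd
  refine mul_right_cancel₀ hb0 ?_
  calc x k q * x i (b i) * dtens x b
      = dtens x (Function.update b k q) * x k (b k) * x i (b i) := by
        rw [dtens_update_mul]; ring
    _ = dtens x (Function.update (Function.update b i q) k (b i)) * x k (b k) * x i (b i) := by
        rw [← htransp, hswap]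
    _ = x k (b i) * (dtens x (Function.update b i q) * x i (b i)) := by
        rw [hupd]; ring
    _ = x k (b i) * x i q * dtens x b := by
        rw [dtens_update_mul]; ring

theorem exists_smul_dtens_const_of_perm_invariant [DecidableEq ι] {n : ℕ} (x : ι → Fin n → ℝ)
    (hx : ∀ j, ∃ q, x j q ≠ 0) (hinv : ∀ σ : Equiv.Perm ι, dtens (x ∘ σ) = dtens x) :
    ∃ (c : ℝ) (w : Fin n → ℝ), dtens x = c • dtens (fun _ : ι => w) := by
  rcases isEmpty_or_nonempty ι with _ | ⟨⟨i⟩⟩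
  · exact ⟨1, 0, by funext idx; simp [dtens]⟩
  choose b hb using hx
  have hswap : ∀ k idx, dtens x (idx ∘ Equiv.swap i k) = dtens x idx := fun k idx => by
    rw [← Equiv.symm_swap, ← dtens_comp_perm_apply, hinv]
  have hprop : ∀ k q, x k q = x k (b i) / x i (b i) * x i q := fun k q => by
    rw [div_mul_eq_mul_div, eq_div_iff (hb i)]
    exact mul_eq_mul_of_dtens_swap_invariant hb (hswap k) q
  refine ⟨∏ k, x k (b i) / x i (b i), x i, ?_⟩
  funext idx
  simp only [dtens, Pi.smul_apply, smul_eq_mul]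
  rw [← Finset.prod_mul_distrib]
  exact Finset.prod_congr rfl fun k _ => hprop k (idx k)

end

/-- If `a · u₁ ⊗ ⋯ ⊗ u_d` is a best rank one approximation of a symmetric tensor `T`,
then so is `a · u_{σ(1)} ⊗ ⋯ ⊗ u_{σ(d)}` for every permutation `σ`; in particular, if the
best rank one approximation is unique then it is symmetric. -/
theorem stmt9 {n d : ℕ} (T : (Fin d → Fin n) → ℝ)
    (hsym : ∀ (σ : Equiv.Perm (Fin d)) (idx : Fin d → Fin n), T (idx ∘ σ) = T idx)
    (a : ℝ) (u : Fin d → Fin n → ℝ) (hu : ∀ j, isUnitVec (u j))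
    (hbest : ∀ (s : ℝ) (x : Fin d → Fin n → ℝ), (∀ j, isUnitVec (x j)) →
      hsNorm (T - a • dtens u) ≤ hsNorm (T - s • dtens x)) :
    (∀ (σ : Equiv.Perm (Fin d)) (s : ℝ) (x : Fin d → Fin n → ℝ), (∀ j, isUnitVec (x j)) →
        hsNorm (T - a • dtens (u ∘ σ)) ≤ hsNorm (T - s • dtens x)) ∧
      ((∀ (b : ℝ) (v : Fin d → Fin n → ℝ), (∀ j, isUnitVec (v j)) →
          (∀ (s : ℝ) (x : Fin d → Fin n → ℝ), (∀ j, isUnitVec (x j)) →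
            hsNorm (T - b • dtens v) ≤ hsNorm (T - s • dtens x)) →
          b • dtens v = a • dtens u) →
        ∃ (c : ℝ) (w : Fin n → ℝ), a • dtens u = c • dtens (fun _ : Fin d => w)) := by
  have hperm : ∀ σ : Equiv.Perm (Fin d),
      hsNorm (T - a • dtens (u ∘ σ)) = hsNorm (T - a • dtens u) :=
    hsNorm_sub_smul_dtens_comp_perm hsym a u
  have hbest_perm : ∀ (σ : Equiv.Perm (Fin d)) s x, (∀ j, isUnitVec (x j)) →
      hsNorm (T - a • dtens (u ∘ σ)) ≤ hsNorm (T - s • dtens x) :=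
    fun σ s x hx => (hperm σ).trans_le (hbest s x hx)
  refine ⟨hbest_perm, fun huniq => ?_⟩
  rcases eq_or_ne a 0 with rfl | ha
  · exact ⟨0, 0, by simp⟩
  have hinv : ∀ σ : Equiv.Perm (Fin d), dtens (u ∘ σ) = dtens u := fun σ =>
    smul_right_injective _ ha (huniq a (u ∘ σ) (fun j => hu (σ j)) (hbest_perm σ))
  obtain ⟨c, w, hcw⟩ :=
    exists_smul_dtens_const_of_perm_invariant u (fun j => (hu j).exists_ne_zero) hinv
  exact ⟨a * c, w, by rw [hcw, smul_smul]⟩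
end
end

section
/- For a symmetric tensor T ∈ Sym(n,d), the spectral norm is attained on the diagonal: max over unit vectors x₁,…,x_d of |⟨T, x₁⊗…⊗x_d⟩| equals max over unit vectors x of |⟨T, x^{⊗d}⟩|. -/
noncomputable section

/-!
Banach's argument. View `T` as a symmetric multilinear form `f` on Euclidean space. Among the
tuples `X` of unit vectors maximizing `|f X|`, choose one for which `‖∑ p, X p‖` is largest. At a
maximizer every slot is a critical point, `f (update X i v) = f X * ⟪X i, v⟫`; together with the
symmetry of `f` this gives `f (…, w, …, w, …) = f X * ‖w‖²` for `w = X i + X j`, so putting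
`± w / ‖w‖` (or `X i`, if `w = 0`) into both slots `i` and `j` yields another maximizer. If
`X i ≠ X j` then `‖w‖ < 2`, and one of the two signs makes the sum of the entries strictly longer,
contradicting the choice of `X`. So all entries of `X` are equal.
-/

open Function Metric
open scoped RealInnerProductSpace

section InnerProduct

variable {E : Type*} [NormedAddCommGroup E] [InnerProductSpace ℝ E]

lemma norm_add_lt_two_of_ne {a b : E} (ha : ‖a‖ = 1) (hb : ‖b‖ = 1) (hab : a ≠ b) :
    ‖a + b‖ < 2 := by
  have hpar := parallelogram_law_with_norm ℝ a b
  have hsub : 0 < ‖a - b‖ := norm_pos_iff.2 (sub_ne_zero.2 hab)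
  nlinarith [norm_nonneg (a + b)]

lemma norm_add_smul_lt_max {z : E} (R : E) (hz : ‖z‖ = 1) {s : ℝ} (hs0 : 0 ≤ s) (hs2 : s < 2) :
    ‖R + s • z‖ < max ‖R + (2 : ℝ) • z‖ ‖R - (2 : ℝ) • z‖ := by
  by_contra! h
  have hplus := pow_le_pow_left₀ (norm_nonneg _) (le_of_max_le_left h) 2
  have hminus := pow_le_pow_left₀ (norm_nonneg _) (le_of_max_le_right h) 2
  simp only [norm_add_sq_real, norm_sub_sq_real, inner_smul_right, norm_smul, hz,
    Real.norm_of_nonneg hs0, Real.norm_two] at hplus hminus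
  nlinarith [abs_nonneg ⟪R, z⟫, le_abs_self ⟪R, z⟫, neg_abs_le ⟪R, z⟫]

lemma apply_eq_mul_inner_of_abs_le [CompleteSpace E] (ℓ : StrongDual ℝ E) {a : E}
    (ha : ‖a‖ = 1) (hmax : ∀ u, ‖u‖ = 1 → |ℓ u| ≤ |ℓ a|) (v : E) :
    ℓ v = ℓ a * ⟪a, v⟫ := by
  set g := (InnerProductSpace.toDual ℝ E).symm ℓ
  have hg : ∀ u, ⟪g, u⟫ = ℓ u := fun u => InnerProductSpace.toDual_symm_apply
  have hnorm : ‖g‖ ≤ |ℓ a| := by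
    rw [LinearIsometryEquiv.norm_map]
    exact ContinuousLinearMap.opNorm_le_of_unit_norm (abs_nonneg _) hmax
  -- Equality in Cauchy–Schwarz: `‖g - ℓ a • a‖² = ‖g‖² - (ℓ a)² ≤ 0`.
  have hga : g = ℓ a • a := by
    have h : ‖g - ℓ a • a‖ ^ 2 ≤ 0 := by
      rw [norm_sub_sq_real, inner_smul_right, hg, norm_smul, ha, Real.norm_eq_abs]
      nlinarith [norm_nonneg g, sq_abs (ℓ a)]
    exact sub_eq_zero.1 (norm_eq_zero.1 (pow_eq_zero_iff two_ne_zero |>.1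
      (le_antisymm h (sq_nonneg _))))
  rw [← hg, hga, inner_smul_left, RCLike.conj_to_real]

end InnerProduct

lemma Finset.sum_update_univ {ι M : Type*} [Fintype ι] [DecidableEq ι] [AddCommGroup M]
    (x : ι → M) (i : ι) (u : M) : ∑ p, update x i u p = ∑ p, x p - x i + u := by
  rw [Finset.sum_update_of_mem (Finset.mem_univ i), ← Finset.sum_erase_eq_sub (Finset.mem_univ i),
    Finset.sdiff_singleton_eq_erase, add_comm]

def unitTuples (ι E : Type*) [NormedAddCommGroup E] : Set (ι → E) :=
  Set.univ.pi fun _ => sphere 0 1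

lemma mem_unitTuples {ι E : Type*} [NormedAddCommGroup E] {x : ι → E} :
    x ∈ unitTuples ι E ↔ ∀ p, ‖x p‖ = 1 := by
  simp [unitTuples]

lemma update_mem_unitTuples {ι E : Type*} [NormedAddCommGroup E] [DecidableEq ι] {x : ι → E}
    (hx : x ∈ unitTuples ι E) (i : ι) {u : E} (hu : ‖u‖ = 1) : update x i u ∈ unitTuples ι E :=
  (Set.update_mem_pi_iff_of_mem hx).2 fun _ => mem_sphere_zero_iff_norm.2 hu

section SymmetricForm

variable {E : Type*} [NormedAddCommGroup E] [InnerProductSpace ℝ E] {ι : Type*} [DecidableEq ι]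

variable (f : ContinuousMultilinearMap ℝ (fun _ : ι => E) ℝ) {X : ι → E}

lemma apply_update_eq_mul_inner [CompleteSpace E] (hX : X ∈ unitTuples ι E)
    (hmax : ∀ x ∈ unitTuples ι E, |f x| ≤ |f X|) (i : ι) (v : E) :
    f (update X i v) = f X * ⟪X i, v⟫ := by
  have h := apply_eq_mul_inner_of_abs_le (f.toContinuousLinearMap X i) (mem_unitTuples.1 hX i)
    (fun u hu => by simpa using hmax _ (update_mem_unitTuples hX i hu)) v
  simpa using h

lemma apply_update_update_add_eq [CompleteSpace E] (hf : ∀ (σ : Equiv.Perm ι) x, f (x ∘ σ) = f x)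
    (hX : X ∈ unitTuples ι E) (hmax : ∀ x ∈ unitTuples ι E, |f x| ≤ |f X|) {i j : ι}
    (hij : i ≠ j) :
    f (update (update X i (X i + X j)) j (X i + X j)) = f X * ‖X i + X j‖ ^ 2 := by
  have hfo := apply_update_eq_mul_inner f hX hmax
  have haa : ∀ v, f (update (update X i (X i)) j v) = f X * ⟪X j, v⟫ := by
    intro v; rw [update_eq_self, hfo]
  have hba : f (update (update X i (X j)) j (X i)) = f X := by
    rw [update_comm hij, ← Equiv.comp_swap_eq_update, hf]
  have hbb : f (update (update X i (X j)) j (X j)) = f X * ⟪X i, X j⟫ := by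
    rw [update_comm hij, update_eq_self, hfo]
  have hunit := mem_unitTuples.1 hX
  rw [update_comm hij, f.map_update_add, ← update_comm hij, ← update_comm hij, f.map_update_add,
    f.map_update_add, haa, haa, hba, hbb, norm_add_sq_real, hunit, hunit,
    real_inner_self_eq_norm_sq, hunit, real_inner_comm (X j) (X i)]
  ring

lemma exists_abs_apply_update_update_eq [CompleteSpace E]
    (hf : ∀ (σ : Equiv.Perm ι) x, f (x ∘ σ) = f x) (hX : X ∈ unitTuples ι E)
    (hmax : ∀ x ∈ unitTuples ι E, |f x| ≤ |f X|) {i j : ι} (hij : i ≠ j) :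
    ∃ z : E, ‖z‖ = 1 ∧ X i + X j = ‖X i + X j‖ • z ∧
      |f (update (update X i z) j z)| = |f X| := by
  have hunit := mem_unitTuples.1 hX
  by_cases hw : X i + X j = 0
  · refine ⟨X i, hunit i, by simp [hw], ?_⟩
    rw [update_eq_self, apply_update_eq_mul_inner f hX hmax, eq_neg_of_add_eq_zero_right hw,
      inner_neg_left, real_inner_self_eq_norm_sq, hunit]
    simp
  · have hs : ‖X i + X j‖ ≠ 0 := norm_ne_zero_iff.2 hw
    refine ⟨‖X i + X j‖⁻¹ • (X i + X j), ?_, ?_, ?_⟩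
    · rw [norm_smul, norm_inv, norm_norm, inv_mul_cancel₀ hs]
    · rw [smul_smul, mul_inv_cancel₀ hs, one_smul]
    · rw [f.map_update_smul, update_comm hij, f.map_update_smul, ← update_comm hij,
        apply_update_update_add_eq f hf hX hmax hij, smul_eq_mul, smul_eq_mul]
      field_simp

variable [Fintype ι]

lemma eq_of_isMaxOn_norm_sum [CompleteSpace E] (hf : ∀ (σ : Equiv.Perm ι) x, f (x ∘ σ) = f x)
    (hX : X ∈ unitTuples ι E) (hmax : ∀ x ∈ unitTuples ι E, |f x| ≤ |f X|)
    (hsum : ∀ x ∈ unitTuples ι E, |f x| = |f X| → ‖∑ p, x p‖ ≤ ‖∑ p, X p‖) (i j : ι) :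
    X i = X j := by
  by_contra hne
  have hij : i ≠ j := fun h => hne (h ▸ rfl)
  obtain ⟨z, hz, hw, hfz⟩ := exists_abs_apply_update_update_eq f hf hX hmax hij
  have hunit := mem_unitTuples.1 hX
  set R := ∑ p, X p - X i - X j with hR
  have hsum_update : ∀ u, ∑ p, update (update X i u) j u p = R + (2 : ℝ) • u := by
    intro u
    rw [Finset.sum_update_univ, Finset.sum_update_univ, update_of_ne hij.symm, two_smul, hR]
    abel
  have hsum_X : ∑ p, X p = R + ‖X i + X j‖ • z := by
    rw [← hw, hR]; abel
  have hfneg : f (update (update X i (-z)) j (-z)) = f (update (update X i z) j z) := by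
    rw [← neg_one_smul ℝ z, f.map_update_smul, update_comm hij, f.map_update_smul,
      ← update_comm hij, smul_smul]
    norm_num
  have hplus := hsum _ (update_mem_unitTuples (update_mem_unitTuples hX i hz) j hz) hfz
  have hminus := hsum _ (update_mem_unitTuples (update_mem_unitTuples hX i (by rwa [norm_neg]))
    j (by rwa [norm_neg])) (hfneg ▸ hfz)
  rw [hsum_update, hsum_X] at hplus hminus
  rw [smul_neg, ← sub_eq_add_neg] at hminus
  exact (norm_add_smul_lt_max R hz (norm_nonneg _)
    (norm_add_lt_two_of_ne (hunit i) (hunit j) hne)).not_ge (max_le hplus hminus)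

theorem exists_norm_eq_one_forall_abs_apply_le [FiniteDimensional ℝ E] [Nontrivial E]
    (hf : ∀ (σ : Equiv.Perm ι) x, f (x ∘ σ) = f x) :
    ∃ u : E, ‖u‖ = 1 ∧ ∀ x ∈ unitTuples ι E, |f x| ≤ |f fun _ => u| := by
  have hcompact : IsCompact (unitTuples ι E) := isCompact_univ_pi fun _ => isCompact_sphere 0 1
  have hcont : Continuous fun x => |f x| := continuous_abs.comp f.cont
  obtain ⟨e, he⟩ := exists_norm_eq E zero_le_one
  obtain ⟨X₀, hX₀, hmax₀⟩ := hcompact.exists_isMaxOn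
    ⟨fun _ => e, mem_unitTuples.2 fun _ => he⟩ hcont.continuousOn
  -- Among the maximizers of `|f|`, pick one whose entries have the longest sum.
  obtain ⟨X, ⟨hX, hXval⟩, hXmax⟩ :=
    (hcompact.inter_right (isClosed_eq hcont continuous_const)).exists_isMaxOn ⟨X₀, hX₀, rfl⟩
      (continuous_norm.comp (continuous_finsetSum _ fun p _ => continuous_apply p)).continuousOn
  have hmax : ∀ x ∈ unitTuples ι E, |f x| ≤ |f X| := fun x hx => hXval ▸ hmax₀ hx
  have hconst := eq_of_isMaxOn_norm_sum f hf hX hmax fun x hx hfx => hXmax ⟨hx, hfx.trans hXval⟩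
  rcases isEmpty_or_nonempty ι with hι | ⟨⟨i₀⟩⟩
  · exact ⟨e, he, fun x _ => by rw [Subsingleton.elim x fun _ => e]⟩
  · refine ⟨X i₀, mem_unitTuples.1 hX i₀, ?_⟩
    rwa [show (fun _ => X i₀) = X from funext fun p => hconst i₀ p]

end SymmetricForm

lemma norm_eq_one_iff_isUnitVec {m : ℕ} (v : EuclideanSpace ℝ (Fin m)) :
    ‖v‖ = 1 ↔ isUnitVec v.ofLp := by
  simp [EuclideanSpace.norm_eq, Real.sqrt_eq_one, isUnitVec]

section TensorForm

variable {ι : Type*} [Fintype ι] [DecidableEq ι] {n : ℕ}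

def tensorForm (T : (ι → Fin n) → ℝ) :
    ContinuousMultilinearMap ℝ (fun _ : ι => EuclideanSpace ℝ (Fin n)) ℝ :=
  ∑ idx, T idx • (ContinuousMultilinearMap.mkPiAlgebra ℝ ι ℝ).compContinuousLinearMap
    fun j => EuclideanSpace.proj (idx j)

lemma tensorForm_apply (T : (ι → Fin n) → ℝ)
    (x : ι → EuclideanSpace ℝ (Fin n)) :
    tensorForm T x = tinner T (dtens fun j => (x j).ofLp) := by
  simp [tensorForm, tinner, dtens]

lemma tensorForm_comp_perm {T : (ι → Fin n) → ℝ}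
    (hsym : ∀ (σ : Equiv.Perm ι) (idx : ι → Fin n), T (idx ∘ σ) = T idx) (σ : Equiv.Perm ι)
    (x : ι → EuclideanSpace ℝ (Fin n)) : tensorForm T (x ∘ σ) = tensorForm T x := by
  simp only [tensorForm_apply, tinner, dtens, comp_apply]
  refine Fintype.sum_equiv (σ.arrowCongr (Equiv.refl (Fin n))) _ _ fun idx => ?_
  rw [← hsym σ.symm idx]
  exact congrArg _ (Fintype.prod_equiv σ _ _ fun j => by simp)

end TensorForm

/-- For a symmetric tensor the spectral norm is attained on the diagonal: the maximum of
`|⟨T, x₁ ⊗ ⋯ ⊗ x_d⟩|` over unit vectors `x_j` equals the maximum of `|⟨T, x^{⊗ d}⟩|` over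
unit vectors `x`. -/
theorem stmt11 {n d : ℕ} (hn : 0 < n) (T : (Fin d → Fin n) → ℝ)
    (hsym : ∀ (σ : Equiv.Perm (Fin d)) (idx : Fin d → Fin n), T (idx ∘ σ) = T idx) :
    specNorm T =
      sSup {r | ∃ x : Fin n → ℝ, isUnitVec x ∧ r = |tinner T (dtens (fun _ : Fin d => x))|} := by
  have : Nonempty (Fin n) := ⟨⟨0, hn⟩⟩
  obtain ⟨u, hu, hmax⟩ :=
    exists_norm_eq_one_forall_abs_apply_le (tensorForm T) (tensorForm_comp_perm hsym)
  have hbound : ∀ x : Fin d → Fin n → ℝ, (∀ j, isUnitVec (x j)) →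
      |tinner T (dtens x)| ≤ |tinner T (dtens fun _ : Fin d => u.ofLp)| := by
    intro x hx
    simpa [tensorForm_apply] using hmax (fun j => WithLp.toLp 2 (x j))
      (mem_unitTuples.2 fun j => (norm_eq_one_iff_isUnitVec _).2 (hx j))
  have hu' := (norm_eq_one_iff_isUnitVec u).1 hu
  set M := |tinner T (dtens fun _ : Fin d => u.ofLp)|
  have hall : IsGreatest {r | ∃ x : Fin d → Fin n → ℝ, (∀ j, isUnitVec (x j)) ∧
      r = |tinner T (dtens x)|} M :=
    ⟨⟨_, fun _ => hu', rfl⟩, fun _ ⟨x, hx, hr⟩ => hr ▸ hbound x hx⟩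
  have hdiag : IsGreatest {r | ∃ x : Fin n → ℝ, isUnitVec x ∧
      r = |tinner T (dtens fun _ : Fin d => x)|} M :=
    ⟨⟨_, hu', rfl⟩, fun _ ⟨x, hx, hr⟩ => hr ▸ hbound _ fun _ => hx⟩
  rw [specNorm, hall.csSup_eq, hdiag.csSup_eq]
end
end

section
/- Let T ∈ Sym(2,3) be a nonzero symmetric 2×2×2 (binary cubic) tensor that admits a nonsymmetric best rank one approximation. Then both frontal 2×2 slices [t_{i,j,1}] and [t_{i,j,2}] have zero trace; equivalently, T is proportional to the tensor with t_{111}=cos θ, t_{112}=sin θ, t_{122}=−cos θ, t_{222}=−sin θ for some θ ∈ [0,2π). -/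
noncomputable section

/-! ### Auxiliary lemmas -/

/-- Last-mode stationarity at a maximizer. -/
lemma aux_lastmode (a b c d M : ℝ) (hM : 0 < M)
    (hmax : ∀ x0 x1 y0 y1 z0 z1 : ℝ, x0^2+x1^2 = 1 → y0^2+y1^2 = 1 → z0^2+z1^2 = 1 →
      a*x0*y0*z0 + b*(x0*y0*z1+x0*y1*z0+x1*y0*z0)
        + c*(x0*y1*z1+x1*y0*z1+x1*y1*z0) + d*x1*y1*z1 ≤ M)
    (x0 x1 y0 y1 z0 z1 : ℝ) (hx : x0^2+x1^2 = 1) (hy : y0^2+y1^2 = 1) (hz : z0^2+z1^2 = 1)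
    (heq : a*x0*y0*z0 + b*(x0*y0*z1+x0*y1*z0+x1*y0*z0)
        + c*(x0*y1*z1+x1*y0*z1+x1*y1*z0) + d*x1*y1*z1 = M) :
    a*x0*y0 + b*(x0*y1+x1*y0) + c*x1*y1 = M*z0 ∧
    b*x0*y0 + c*(x0*y1+x1*y0) + d*x1*y1 = M*z1 := by
  obtain ⟨N0, hN0⟩ : ∃ n : ℝ, n = a*x0*y0 + b*(x0*y1+x1*y0) + c*x1*y1 := ⟨_, rfl⟩
  obtain ⟨N1, hN1⟩ : ∃ n : ℝ, n = b*x0*y0 + c*(x0*y1+x1*y0) + d*x1*y1 := ⟨_, rfl⟩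
  have key : ∀ t0 t1 : ℝ, t0^2+t1^2 = 1 → N0*t0 + N1*t1 ≤ M := by
    intro t0 t1 ht
    have h := hmax x0 x1 y0 y1 t0 t1 hx hy ht
    have e : N0*t0 + N1*t1 = a*x0*y0*t0 + b*(x0*y0*t1+x0*y1*t0+x1*y0*t0)
        + c*(x0*y1*t1+x1*y0*t1+x1*y1*t0) + d*x1*y1*t1 := by rw [hN0, hN1]; ring
    linarith [h, e.le, e.ge]
  have hNz : N0*z0 + N1*z1 = M := by rw [hN0, hN1]; linear_combination heq
  have hss : 0 < N0^2 + N1^2 := by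
    nlinarith [sq_nonneg (N0*z1 - N1*z0), sq_nonneg (N0*z0+N1*z1), hM, hz, hNz]
  obtain ⟨r, hrdef⟩ : ∃ r : ℝ, r = Real.sqrt (N0^2+N1^2) := ⟨_, rfl⟩
  have hr2 : r^2 = N0^2+N1^2 := by rw [hrdef]; exact Real.sq_sqrt (by positivity)
  have hrpos : 0 < r := hrdef ▸ Real.sqrt_pos.mpr hss
  have hunit : (N0/r)^2 + (N1/r)^2 = 1 := by
    field_simp
    linarith [hr2]
  have hval : N0*(N0/r) + N1*(N1/r) = r := by
    field_simp
    linarith [hr2]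
  have hle : r ≤ M := by
    have h := key (N0/r) (N1/r) hunit
    linarith [hval.le, hval.ge]
  have hsq : N0^2 + N1^2 ≤ M^2 := by nlinarith [hle, hrpos.le, hr2]
  have h1 : M^2 + (N0*z1 - N1*z0)^2 = N0^2+N1^2 := by
    linear_combination (-(N0*z0+N1*z1+M))*hNz + (N0^2+N1^2)*hz
  have hc2 : (N0*z1 - N1*z0)^2 ≤ 0 := by linarith
  have hcross : N0*z1 - N1*z0 = 0 :=
    (pow_eq_zero_iff two_ne_zero).mp (le_antisymm hc2 (sq_nonneg _))
  constructor
  · rw [← hN0]; linear_combination z0*hNz + z1*hcross - N0*hz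
  · rw [← hN1]; linear_combination z1*hNz - z0*hcross - N1*hz

/-- Core: a maximizer with a noncollinear pair forces tracelessness. -/
lemma aux_core (a b c d M u0 u1 v0 v1 w0 w1 : ℝ) (hM : 0 < M)
    (hu : u0^2+u1^2 = 1) (hv : v0^2+v1^2 = 1) (hw : w0^2+w1^2 = 1)
    (hmax : ∀ x0 x1 y0 y1 z0 z1 : ℝ, x0^2+x1^2 = 1 → y0^2+y1^2 = 1 → z0^2+z1^2 = 1 →
      a*x0*y0*z0 + b*(x0*y0*z1+x0*y1*z0+x1*y0*z0)
        + c*(x0*y1*z1+x1*y0*z1+x1*y1*z0) + d*x1*y1*z1 ≤ M)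
    (heq : a*u0*v0*w0 + b*(u0*v0*w1+u0*v1*w0+u1*v0*w0)
        + c*(u0*v1*w1+u1*v0*w1+u1*v1*w0) + d*u1*v1*w1 = M)
    (hnc : u0*v1 - u1*v0 ≠ 0) :
    a + c = 0 ∧ b + d = 0 := by
  obtain ⟨m3a, m3b⟩ := aux_lastmode a b c d M hM hmax u0 u1 v0 v1 w0 w1 hu hv hw heq
  obtain ⟨m1a, m1b⟩ := aux_lastmode a b c d M hM hmax v0 v1 w0 w1 u0 u1 hv hw hu
    (by linear_combination heq)
  obtain ⟨m2a, m2b⟩ := aux_lastmode a b c d M hM hmax u0 u1 w0 w1 v0 v1 hu hw hv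
    (by linear_combination heq)
  have hzero : (u0*v1 - u1*v0) * ((a+c)*w0 + (b+d)*w1) = 0 := by
    linear_combination (-u1)*m1a + u0*m1b + v1*m2a + (-v0)*m2b
  have hR3 : (a+c)*w0 + (b+d)*w1 = 0 := by
    rcases mul_eq_zero.mp hzero with h | h
    · exact absurd h hnc
    · exact h
  have hxu1 : ((3*u0-4*u1)/5)^2 + ((4*u0+3*u1)/5)^2 = 1 := by linear_combination hu
  have hyv1 : ((3*v0+4*v1)/5)^2 + ((-4*v0+3*v1)/5)^2 = 1 := by linear_combination hv
  have hF1 : a*((3*u0-4*u1)/5)*((3*v0+4*v1)/5)*w0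
      + b*(((3*u0-4*u1)/5)*((3*v0+4*v1)/5)*w1 + ((3*u0-4*u1)/5)*((-4*v0+3*v1)/5)*w0
          + ((4*u0+3*u1)/5)*((3*v0+4*v1)/5)*w0)
      + c*(((3*u0-4*u1)/5)*((-4*v0+3*v1)/5)*w1 + ((4*u0+3*u1)/5)*((3*v0+4*v1)/5)*w1
          + ((4*u0+3*u1)/5)*((-4*v0+3*v1)/5)*w0)
      + d*((4*u0+3*u1)/5)*((-4*v0+3*v1)/5)*w1 = M := by
    linear_combination heq + ((u0*v1-u1*v0)*(12/25) - (u0*v0+u1*v1)*(16/25))*hR3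
  obtain ⟨n3a, n3b⟩ := aux_lastmode a b c d M hM hmax ((3*u0-4*u1)/5) ((4*u0+3*u1)/5)
    ((3*v0+4*v1)/5) ((-4*v0+3*v1)/5) w0 w1 hxu1 hyv1 hw hF1
  have E1 : ((b+d)*w0 - (a+c)*w1) * ((u0*v1-u1*v0)*(12/25) - (u0*v0+u1*v1)*(16/25)) = 0 := by
    linear_combination (-w1)*n3a + w0*n3b + w1*m3a + (-w0)*m3b
  have hxu2 : ((3*u0+4*u1)/5)^2 + ((-4*u0+3*u1)/5)^2 = 1 := by linear_combination hu
  have hyv2 : ((3*v0-4*v1)/5)^2 + ((4*v0+3*v1)/5)^2 = 1 := by linear_combination hv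
  have hF2 : a*((3*u0+4*u1)/5)*((3*v0-4*v1)/5)*w0
      + b*(((3*u0+4*u1)/5)*((3*v0-4*v1)/5)*w1 + ((3*u0+4*u1)/5)*((4*v0+3*v1)/5)*w0
          + ((-4*u0+3*u1)/5)*((3*v0-4*v1)/5)*w0)
      + c*(((3*u0+4*u1)/5)*((4*v0+3*v1)/5)*w1 + ((-4*u0+3*u1)/5)*((3*v0-4*v1)/5)*w1
          + ((-4*u0+3*u1)/5)*((4*v0+3*v1)/5)*w0)
      + d*((-4*u0+3*u1)/5)*((4*v0+3*v1)/5)*w1 = M := by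
    linear_combination heq + ((u0*v1-u1*v0)*(-12/25) - (u0*v0+u1*v1)*(16/25))*hR3
  obtain ⟨n3a', n3b'⟩ := aux_lastmode a b c d M hM hmax ((3*u0+4*u1)/5) ((-4*u0+3*u1)/5)
    ((3*v0-4*v1)/5) ((4*v0+3*v1)/5) w0 w1 hxu2 hyv2 hw hF2
  have E2 : ((b+d)*w0 - (a+c)*w1) * ((u0*v1-u1*v0)*(-12/25) - (u0*v0+u1*v1)*(16/25)) = 0 := by
    linear_combination (-w1)*n3a' + w0*n3b' + w1*m3a + (-w0)*m3b
  have hZ : (b+d)*w0 - (a+c)*w1 = 0 := by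
    rcases mul_eq_zero.mp E1 with h | h1
    · exact h
    rcases mul_eq_zero.mp E2 with h | h2
    · exact h
    exact absurd (by linarith : u0*v1 - u1*v0 = 0) hnc
  constructor
  · linear_combination w0*hR3 - w1*hZ - (a+c)*hw
  · linear_combination w1*hR3 + w0*hZ - (b+d)*hw

/-- Collinearity of unit vectors in the plane. -/
lemma aux_coll (x0 x1 y0 y1 : ℝ) (hx : x0^2+x1^2 = 1) (hy : y0^2+y1^2 = 1)
    (h : x0*y1 - x1*y0 = 0) :
    (y0 = x0 ∧ y1 = x1) ∨ (y0 = -x0 ∧ y1 = -x1) := by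
  have hg : (x0*y0+x1*y1)^2 = 1 := by
    linear_combination (y0^2+y1^2)*hx + hy - (x0*y1-x1*y0)*h
  have hfac : (x0*y0+x1*y1 - 1)*(x0*y0+x1*y1 + 1) = 0 := by linear_combination hg
  rcases mul_eq_zero.mp hfac with h1 | h1
  · left
    have hg1 : x0*y0+x1*y1 = 1 := by linarith
    exact ⟨by linear_combination (-y0)*hx + x0*hg1 + (-x1)*h,
           by linear_combination (-y1)*hx + x1*hg1 + x0*h⟩
  · right
    have hg2 : x0*y0+x1*y1 = -1 := by linarith
    exact ⟨by linear_combination (-y0)*hx + x0*hg2 + (-x1)*h,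
           by linear_combination (-y1)*hx + x1*hg2 + x0*h⟩

def aux_equiv : (Fin 2 × Fin 2 × Fin 2) ≃ (Fin 3 → Fin 2) where
  toFun p := ![p.1, p.2.1, p.2.2]
  invFun f := (f 0, f 1, f 2)
  left_inv := by rintro ⟨i, j, k⟩; rfl
  right_inv := by intro f; funext i; fin_cases i <;> rfl

lemma aux_sum8 (g : (Fin 3 → Fin 2) → ℝ) :
    ∑ idx, g idx = g ![0,0,0] + g ![0,0,1] + g ![0,1,0] + g ![0,1,1]
      + g ![1,0,0] + g ![1,0,1] + g ![1,1,0] + g ![1,1,1] := by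
  rw [← Equiv.sum_comp aux_equiv g]
  rw [Fintype.sum_prod_type]
  simp only [Fintype.sum_prod_type, Fin.sum_univ_two, aux_equiv, Equiv.coe_fn_mk]
  ring

lemma aux_dtens3 (x : Fin 3 → Fin 2 → ℝ) (idx : Fin 3 → Fin 2) :
    dtens x idx = x 0 (idx 0) * x 1 (idx 1) * x 2 (idx 2) := by
  simp [dtens, Fin.prod_univ_three]

lemma aux_unit2 {v : Fin 2 → ℝ} (h : isUnitVec v) : v 0 ^ 2 + v 1 ^ 2 = 1 := by
  simpa [isUnitVec, Fin.sum_univ_two] using h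

lemma aux_build (A k1 k2 : ℝ) (u : Fin 3 → Fin 2 → ℝ)
    (h1 : ∀ i, u 1 i = k1 * u 0 i) (h2 : ∀ i, u 2 i = k2 * u 0 i) :
    A • dtens u = (A*k1*k2) • dtens (fun _ => u 0) := by
  funext idx
  simp only [Pi.smul_apply, smul_eq_mul, aux_dtens3, h1, h2]
  ring

/-- If a nonzero symmetric tensor `T ∈ Sym(2,3)` admits a nonsymmetric best rank one
approximation, then both frontal 2×2 slices of `T` have zero trace; equivalently, `T` is a
nonzero multiple of the tensor with entries
`t₁₁₁ = cos θ, t₁₁₂ = sin θ, t₁₂₂ = -cos θ, t₂₂₂ = -sin θ` for some `θ ∈ [0, 2π)`. -/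
theorem stmt12 (T : (Fin 3 → Fin 2) → ℝ) (hT : T ≠ 0)
    (hsym : ∀ (σ : Equiv.Perm (Fin 3)) (idx : Fin 3 → Fin 2), T (idx ∘ σ) = T idx)
    (hns : ∃ (a : ℝ) (u : Fin 3 → Fin 2 → ℝ), (∀ j, isUnitVec (u j)) ∧
      (∀ (s : ℝ) (x : Fin 3 → Fin 2 → ℝ), (∀ j, isUnitVec (x j)) →
        hsNorm (T - a • dtens u) ≤ hsNorm (T - s • dtens x)) ∧
      ¬ ∃ (c : ℝ) (v : Fin 2 → ℝ), a • dtens u = c • dtens (fun _ : Fin 3 => v)) :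
    (T ![0, 0, 0] + T ![1, 1, 0] = 0 ∧ T ![0, 0, 1] + T ![1, 1, 1] = 0) ∧
      ∃ (c θ : ℝ), c ≠ 0 ∧ 0 ≤ θ ∧ θ < 2 * Real.pi ∧
        T ![0, 0, 0] = c * Real.cos θ ∧ T ![0, 0, 1] = c * Real.sin θ ∧
        T ![0, 1, 1] = -(c * Real.cos θ) ∧ T ![1, 1, 1] = -(c * Real.sin θ) := by
  classical
  obtain ⟨A, u, huu, hbest, hnsym⟩ := hns
  obtain ⟨a, ha⟩ : ∃ r : ℝ, r = T ![0,0,0] := ⟨_, rfl⟩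
  obtain ⟨b, hb⟩ : ∃ r : ℝ, r = T ![0,0,1] := ⟨_, rfl⟩
  obtain ⟨c, hc⟩ : ∃ r : ℝ, r = T ![0,1,1] := ⟨_, rfl⟩
  obtain ⟨d, hd⟩ : ∃ r : ℝ, r = T ![1,1,1] := ⟨_, rfl⟩
  have e010 : T ![0,1,0] = b := by
    have h := hsym (Equiv.swap 1 2) ![0,0,1]
    rw [show (![0,0,1] : Fin 3 → Fin 2) ∘ (Equiv.swap 1 2) = ![0,1,0] by decide] at h
    exact h.trans hb.symm
  have e100 : T ![1,0,0] = b := by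
    have h := hsym (Equiv.swap 0 2) ![0,0,1]
    rw [show (![0,0,1] : Fin 3 → Fin 2) ∘ (Equiv.swap 0 2) = ![1,0,0] by decide] at h
    exact h.trans hb.symm
  have e101 : T ![1,0,1] = c := by
    have h := hsym (Equiv.swap 0 1) ![0,1,1]
    rw [show (![0,1,1] : Fin 3 → Fin 2) ∘ (Equiv.swap 0 1) = ![1,0,1] by decide] at h
    exact h.trans hc.symm
  have e110 : T ![1,1,0] = c := by
    have h := hsym (Equiv.swap 0 2) ![0,1,1]
    rw [show (![0,1,1] : Fin 3 → Fin 2) ∘ (Equiv.swap 0 2) = ![1,1,0] by decide] at h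
    exact h.trans hc.symm
  -- expansion of the multilinear form
  have hFx : ∀ x : Fin 3 → Fin 2 → ℝ, tinner T (dtens x) =
      a*(x 0 0)*(x 1 0)*(x 2 0)
      + b*((x 0 0)*(x 1 0)*(x 2 1) + (x 0 0)*(x 1 1)*(x 2 0) + (x 0 1)*(x 1 0)*(x 2 0))
      + c*((x 0 0)*(x 1 1)*(x 2 1) + (x 0 1)*(x 1 0)*(x 2 1) + (x 0 1)*(x 1 1)*(x 2 0))
      + d*(x 0 1)*(x 1 1)*(x 2 1) := by
    intro x
    show (∑ idx, T idx * dtens x idx) = _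
    rw [aux_sum8 (fun idx => T idx * dtens x idx)]
    simp only [aux_dtens3]
    norm_num [Matrix.cons_val_two, Matrix.tail_cons, Matrix.head_cons, e010, e100, e101, e110, ← ha, ← hb, ← hc, ← hd]
    ring
  -- squared norm formulas
  have hsqsum : ∀ X : (Fin 3 → Fin 2) → ℝ, hsNorm X ^ 2 = ∑ idx, X idx ^ 2 := by
    intro X
    exact Real.sq_sqrt (Finset.sum_nonneg fun i _ => sq_nonneg _)
  have hres : ∀ (s : ℝ) (x : Fin 3 → Fin 2 → ℝ), (∀ j, isUnitVec (x j)) →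
      hsNorm (T - s • dtens x) ^ 2
        = (∑ idx, T idx ^ 2) - 2*s*(tinner T (dtens x)) + s^2 := by
    intro s x hx
    have hD : ∑ idx, (dtens x idx)^2 = 1 := by
      rw [aux_sum8 (fun idx => dtens x idx ^ 2)]
      simp only [aux_dtens3]
      norm_num [Matrix.cons_val_two, Matrix.tail_cons, Matrix.head_cons]
      have h0 := aux_unit2 (hx 0); have h1 := aux_unit2 (hx 1); have h2 := aux_unit2 (hx 2)
      linear_combination (((x 1 0)^2+(x 1 1)^2)*((x 2 0)^2+(x 2 1)^2))*h0
        + ((x 2 0)^2+(x 2 1)^2)*h1 + h2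
    rw [hsqsum]
    have hterm : ∀ idx, (T - s • dtens x) idx ^ 2
        = T idx^2 - 2*s*(T idx * dtens x idx) + s^2 * (dtens x idx)^2 := by
      intro idx
      simp only [Pi.sub_apply, Pi.smul_apply, smul_eq_mul]
      ring
    rw [Finset.sum_congr rfl fun i _ => hterm i, Finset.sum_add_distrib,
      Finset.sum_sub_distrib, ← Finset.mul_sum, ← Finset.mul_sum, hD]
    show _ = _ - 2*s*(∑ idx, T idx * dtens x idx) + s^2
    ring
  -- the coefficient equals the value of the form, and it is maximal
  have hAf : A = tinner T (dtens u) := by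
    have h := hbest (tinner T (dtens u)) u huu
    have h2 : hsNorm (T - A • dtens u)^2 ≤ hsNorm (T - tinner T (dtens u) • dtens u)^2 :=
      pow_le_pow_left₀ (Real.sqrt_nonneg _) h 2
    rw [hres A u huu, hres _ u huu] at h2
    have h3 : (A - tinner T (dtens u))^2 ≤ 0 := by nlinarith [h2]
    have h4 : A - tinner T (dtens u) = 0 :=
      (pow_eq_zero_iff two_ne_zero).mp (le_antisymm h3 (sq_nonneg _))
    linarith
  have hmaxsq : ∀ x : Fin 3 → Fin 2 → ℝ, (∀ j, isUnitVec (x j)) →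
      (tinner T (dtens x))^2 ≤ A^2 := by
    intro x hx
    have h := hbest (tinner T (dtens x)) x hx
    have h2 : hsNorm (T - A • dtens u)^2 ≤ hsNorm (T - tinner T (dtens x) • dtens x)^2 :=
      pow_le_pow_left₀ (Real.sqrt_nonneg _) h 2
    rw [hres A u huu, hres _ x hx, ← hAf] at h2
    nlinarith [h2]
  have hAne : A ≠ 0 := by
    intro h0
    exact hnsym ⟨0, 0, by simp [h0]⟩
  -- coordinates of the maximizer
  have hu0 : (u 0 0)^2 + (u 0 1)^2 = 1 := aux_unit2 (huu 0)
  have hu1 : (u 1 0)^2 + (u 1 1)^2 = 1 := aux_unit2 (huu 1)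
  have hu2 : (u 2 0)^2 + (u 2 1)^2 = 1 := aux_unit2 (huu 2)
  obtain ⟨M, hMdef⟩ : ∃ r : ℝ, r = |A| := ⟨_, rfl⟩
  have hMpos : 0 < M := hMdef ▸ abs_pos.mpr hAne
  have hM2 : M^2 = A^2 := by rw [hMdef, sq_abs]
  have HMAX : ∀ x0 x1 y0 y1 z0 z1 : ℝ, x0^2+x1^2 = 1 → y0^2+y1^2 = 1 → z0^2+z1^2 = 1 →
      a*x0*y0*z0 + b*(x0*y0*z1+x0*y1*z0+x1*y0*z0)
        + c*(x0*y1*z1+x1*y0*z1+x1*y1*z0) + d*x1*y1*z1 ≤ M := by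
    intro x0 x1 y0 y1 z0 z1 hx hy hz
    have hxu : ∀ j, isUnitVec ((![![x0,x1], ![y0,y1], ![z0,z1]] : Fin 3 → Fin 2 → ℝ) j) := by
      intro j
      fin_cases j <;> simp [isUnitVec, Fin.sum_univ_two] <;> assumption
    have h := hmaxsq ![![x0,x1], ![y0,y1], ![z0,z1]] hxu
    obtain ⟨FV, hFVdef⟩ : ∃ r : ℝ, r = a*x0*y0*z0 + b*(x0*y0*z1+x0*y1*z0+x1*y0*z0)
        + c*(x0*y1*z1+x1*y0*z1+x1*y1*z0) + d*x1*y1*z1 := ⟨_, rfl⟩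
    have hFV : tinner T (dtens ![![x0,x1], ![y0,y1], ![z0,z1]]) = FV := by
      rw [hFx, hFVdef]
      norm_num [Matrix.cons_val_two, Matrix.tail_cons, Matrix.head_cons]
    rw [hFV] at h
    rw [← hFVdef]
    nlinarith [h, hMpos, hM2]
  have heqF : a*(u 0 0)*(u 1 0)*(u 2 0)
      + b*((u 0 0)*(u 1 0)*(u 2 1) + (u 0 0)*(u 1 1)*(u 2 0) + (u 0 1)*(u 1 0)*(u 2 0))
      + c*((u 0 0)*(u 1 1)*(u 2 1) + (u 0 1)*(u 1 0)*(u 2 1) + (u 0 1)*(u 1 1)*(u 2 0))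
      + d*(u 0 1)*(u 1 1)*(u 2 1) = A := by
    rw [hAf]; exact (hFx u).symm
  -- some pair of factors is noncollinear
  have hpair : (u 0 0 * u 1 1 - u 0 1 * u 1 0 ≠ 0) ∨ (u 0 0 * u 2 1 - u 0 1 * u 2 0 ≠ 0) := by
    by_contra hcon
    push_neg at hcon
    obtain ⟨h01, h02⟩ := hcon
    have htwo : ∀ i : Fin 2, i = 0 ∨ i = 1 := by decide
    rcases aux_coll _ _ _ _ hu0 hu1 h01 with ⟨p0, p1⟩ | ⟨p0, p1⟩ <;>
      rcases aux_coll _ _ _ _ hu0 hu2 h02 with ⟨q0, q1⟩ | ⟨q0, q1⟩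
    · exact hnsym ⟨A*1*1, u 0, aux_build A 1 1 u
        (fun i => by rcases htwo i with h | h <;> subst h
                     · rw [p0]; ring
                     · rw [p1]; ring)
        (fun i => by rcases htwo i with h | h <;> subst h
                     · rw [q0]; ring
                     · rw [q1]; ring)⟩
    · exact hnsym ⟨A*1*(-1), u 0, aux_build A 1 (-1) u
        (fun i => by rcases htwo i with h | h <;> subst h
                     · rw [p0]; ring
                     · rw [p1]; ring)
        (fun i => by rcases htwo i with h | h <;> subst h
                     · rw [q0]; ring
                     · rw [q1]; ring)⟩
    · exact hnsym ⟨A*(-1)*1, u 0, aux_build A (-1) 1 u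
        (fun i => by rcases htwo i with h | h <;> subst h
                     · rw [p0]; ring
                     · rw [p1]; ring)
        (fun i => by rcases htwo i with h | h <;> subst h
                     · rw [q0]; ring
                     · rw [q1]; ring)⟩
    · exact hnsym ⟨A*(-1)*(-1), u 0, aux_build A (-1) (-1) u
        (fun i => by rcases htwo i with h | h <;> subst h
                     · rw [p0]; ring
                     · rw [p1]; ring)
        (fun i => by rcases htwo i with h | h <;> subst h
                     · rw [q0]; ring
                     · rw [q1]; ring)⟩
  -- apply the core lemma
  have hkey : a + c = 0 ∧ b + d = 0 := by
    rcases hpair with hnc | hnc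
    · rcases abs_cases A with ⟨hMA, _⟩ | ⟨hMA, _⟩
      · exact aux_core a b c d M (u 0 0) (u 0 1) (u 1 0) (u 1 1) (u 2 0) (u 2 1)
          hMpos hu0 hu1 hu2 HMAX (by rw [hMdef, hMA]; linear_combination heqF) hnc
      · exact aux_core a b c d M (-(u 0 0)) (-(u 0 1)) (u 1 0) (u 1 1) (u 2 0) (u 2 1)
          hMpos (by linear_combination hu0) hu1 hu2 HMAX
          (by rw [hMdef, hMA]; linear_combination -heqF)
          (fun h => hnc (by linear_combination -h))
    · rcases abs_cases A with ⟨hMA, _⟩ | ⟨hMA, _⟩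
      · exact aux_core a b c d M (u 0 0) (u 0 1) (u 2 0) (u 2 1) (u 1 0) (u 1 1)
          hMpos hu0 hu2 hu1 HMAX (by rw [hMdef, hMA]; linear_combination heqF) hnc
      · exact aux_core a b c d M (-(u 0 0)) (-(u 0 1)) (u 2 0) (u 2 1) (u 1 0) (u 1 1)
          hMpos (by linear_combination hu0) hu2 hu1 HMAX
          (by rw [hMdef, hMA]; linear_combination -heqF)
          (fun h => hnc (by linear_combination -h))
  obtain ⟨hac, hbd⟩ := hkey
  have hab : ¬(a = 0 ∧ b = 0) := by
    rintro ⟨ha0, hb0⟩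
    apply hT
    have hc0 : c = 0 := by linarith
    have hd0 : d = 0 := by linarith
    funext idx
    have hidx : idx = ![idx 0, idx 1, idx 2] := by funext i; fin_cases i <;> rfl
    show T idx = 0
    rw [hidx]
    have h2 : ∀ i : Fin 2, i = 0 ∨ i = 1 := by decide
    rcases h2 (idx 0) with h0 | h0 <;> rcases h2 (idx 1) with h1 | h1 <;>
      rcases h2 (idx 2) with h3 | h3 <;> rw [h0, h1, h3]
    · rw [← ha]; exact ha0
    · rw [← hb]; exact hb0
    · rw [e010]; exact hb0
    · rw [← hc]; exact hc0
    · rw [e100]; exact hb0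
    · rw [e101]; exact hc0
    · rw [e110]; exact hc0
    · rw [← hd]; exact hd0
  constructor
  · constructor
    · rw [← ha, e110]; exact hac
    · rw [← hb, ← hd]; exact hbd
  · have hz : (Complex.mk a b) ≠ 0 := by
      intro h
      exact hab ⟨congrArg Complex.re h, congrArg Complex.im h⟩
    have habs : ‖Complex.mk a b‖ ≠ 0 := norm_ne_zero_iff.mpr hz
    have hcosarg : Real.cos (Complex.arg (Complex.mk a b)) = a / ‖Complex.mk a b‖ :=
      Complex.cos_arg hz
    have hsinarg : Real.sin (Complex.arg (Complex.mk a b)) = b / ‖Complex.mk a b‖ :=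
      Complex.sin_arg _
    obtain ⟨θ0, hθ0⟩ : ∃ r : ℝ, r = Complex.arg (Complex.mk a b) := ⟨_, rfl⟩
    have hθlo : -Real.pi < θ0 := hθ0 ▸ Complex.neg_pi_lt_arg _
    have hθhi : θ0 ≤ Real.pi := hθ0 ▸ Complex.arg_le_pi _
    refine ⟨‖Complex.mk a b‖, if 0 ≤ θ0 then θ0 else θ0 + 2*Real.pi,
      habs, ?_, ?_, ?_, ?_, ?_, ?_⟩
    · split_ifs with h
      · exact h
      · linarith [Real.pi_pos]
    · split_ifs with h
      · linarith [Real.pi_pos]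
      · push_neg at h; linarith
    · have hcos : Real.cos (if 0 ≤ θ0 then θ0 else θ0 + 2*Real.pi) = a / ‖Complex.mk a b‖ := by
        split_ifs with h
        · rw [hθ0]; exact hcosarg
        · rw [Real.cos_add_two_pi, hθ0]; exact hcosarg
      rw [← ha, hcos]
      field_simp
    · have hsin : Real.sin (if 0 ≤ θ0 then θ0 else θ0 + 2*Real.pi) = b / ‖Complex.mk a b‖ := by
        split_ifs with h
        · rw [hθ0]; exact hsinarg
        · rw [Real.sin_add_two_pi, hθ0]; exact hsinarg
      rw [← hb, hsin]
      field_simp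
    · have hcos : Real.cos (if 0 ≤ θ0 then θ0 else θ0 + 2*Real.pi) = a / ‖Complex.mk a b‖ := by
        split_ifs with h
        · rw [hθ0]; exact hcosarg
        · rw [Real.cos_add_two_pi, hθ0]; exact hcosarg
      rw [← hc, hcos]
      have : ‖Complex.mk a b‖ * (a / ‖Complex.mk a b‖) = a := by
        field_simp
      rw [this]
      linarith
    · have hsin : Real.sin (if 0 ≤ θ0 then θ0 else θ0 + 2*Real.pi) = b / ‖Complex.mk a b‖ := by
        split_ifs with h
        · rw [hθ0]; exact hsinarg
        · rw [Real.sin_add_two_pi, hθ0]; exact hsinarg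
      rw [← hd, hsin]
      have : ‖Complex.mk a b‖ * (b / ‖Complex.mk a b‖) = b := by
        field_simp
      rw [this]
      linarith

end
end

section
/- Let θ ∈ [0,2π) and let T ∈ Sym(2,3) be given by t_{111}=cos θ, t_{112}=t_{121}=t_{211}=sin θ, t_{122}=t_{212}=t_{221}=−cos θ, t_{222}=−sin θ. Then for every unit vector u ∈ S¹, the contracted 2×2 symmetric matrix A(u) := T × u satisfies A(u)² = I₂; in particular λ₁(A(u)) = 1 = −λ₂(A(u)) for all u. -/
noncomputable section

/-- The symmetric tensor `T ∈ Sym(2,3)` with `t₁₁₁ = cos θ`, `t₁₁₂ = sin θ`,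
`t₁₂₂ = -cos θ`, `t₂₂₂ = -sin θ` (an entry depends only on the number of indices equal
to the second basis index). -/
def Tten (θ : ℝ) : (Fin 3 → Fin 2) → ℝ := fun idx =>
  let k := ∑ j, ((idx j : ℕ))
  if k = 0 then Real.cos θ
  else if k = 1 then Real.sin θ
  else if k = 2 then -Real.cos θ
  else -Real.sin θ

/-- The 2×2 symmetric matrix `A(u) = T × u`, contraction of `Tten θ` against `u`. -/
def Amat (θ : ℝ) (u : Fin 2 → ℝ) : Matrix (Fin 2) (Fin 2) ℝ :=
  Matrix.of fun i j => ∑ k, Tten θ ![i, j, k] * u k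

/-
`A(u)` is the traceless symmetric matrix `!![a, b; b, -a]` with `a = cos θ u₀ + sin θ u₁` and
`b = sin θ u₀ - cos θ u₁`. These are the coordinates of `u` in the orthonormal basis
`(cos θ, sin θ), (sin θ, -cos θ)`, so `a² + b² = |u|² = 1`. Such a matrix squares to
`(a² + b²) I₂` and has characteristic polynomial `X² - (a² + b²)`: it is a reflection,
with eigenvalues `±1`.
-/

open Polynomial

namespace Matrix

variable {R : Type*} [CommRing R]

theorem fin_two_reflection_mul_self (a b : R) :
    !![a, b; b, -a] * !![a, b; b, -a] = (a ^ 2 + b ^ 2) • (1 : Matrix (Fin 2) (Fin 2) R) := by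
  ext i j
  fin_cases i <;> fin_cases j <;> simp [Matrix.mul_apply, Fin.sum_univ_two] <;> ring

theorem charpoly_fin_two_reflection [Nontrivial R] (a b : R) :
    (!![a, b; b, -a]).charpoly = X ^ 2 - C (a ^ 2 + b ^ 2) := by
  rw [charpoly_fin_two, trace_fin_two_of, det_fin_two_of, add_neg_cancel,
    show a * -a - b * b = -(a ^ 2 + b ^ 2) by ring, map_neg, map_zero]
  ring

theorem spectrum_fin_two_reflection {K : Type*} [Field K] (a b : K) :
    spectrum K !![a, b; b, -a] = {x | x ^ 2 = a ^ 2 + b ^ 2} := by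
  ext x
  simp [mem_spectrum_iff_isRoot_charpoly, charpoly_fin_two_reflection, sub_eq_zero]

end Matrix

theorem Amat_eq (θ : ℝ) (u : Fin 2 → ℝ) :
    Amat θ u = !![Real.cos θ * u 0 + Real.sin θ * u 1, Real.sin θ * u 0 - Real.cos θ * u 1;
                  Real.sin θ * u 0 - Real.cos θ * u 1, -(Real.cos θ * u 0 + Real.sin θ * u 1)] := by
  ext i j
  fin_cases i <;> fin_cases j <;>
    simp [Amat, Tten, Fin.sum_univ_three, Fin.sum_univ_two] <;> ring

theorem sq_add_sq_rotated_coords_of_isUnitVec (θ : ℝ) {u : Fin 2 → ℝ} (hu : isUnitVec u) :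
    (Real.cos θ * u 0 + Real.sin θ * u 1) ^ 2 + (Real.sin θ * u 0 - Real.cos θ * u 1) ^ 2 = 1 := by
  rw [isUnitVec, Fin.sum_univ_two] at hu
  linear_combination (u 0 ^ 2 + u 1 ^ 2) * Real.sin_sq_add_cos_sq θ + hu

/-- For every unit vector `u ∈ S¹`, the contraction `A(u) = Tten θ × u` satisfies
`A(u)² = I₂`; in particular `λ₁(A(u)) = 1 = -λ₂(A(u))`, i.e. the spectrum is `{1, -1}`. -/
theorem stmt13 (θ : ℝ) (u : Fin 2 → ℝ) (hu : isUnitVec u) :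
    Amat θ u * Amat θ u = 1 ∧ spectrum ℝ (Amat θ u) = {1, -1} := by
  have hab := sq_add_sq_rotated_coords_of_isUnitVec θ hu
  rw [Amat_eq]
  refine ⟨by rw [Matrix.fin_two_reflection_mul_self, hab, one_smul], ?_⟩
  rw [Matrix.spectrum_fin_two_reflection, hab]
  ext x
  simp [sq_eq_one_iff]
end
end

section
/- Let d ≥ 2 and T ∈ Sym(2,d) a nonzero symmetric d-tensor on ℝ². If T has a nonsymmetric best rank one approximation, then for every choice of indices i₃,…,i_d ∈ {1,2}, the 2×2 symmetric slice [t_{i,j,i₃,…,i_d}]_{i,j∈{1,2}} has zero trace, i.e., t_{1,1,i₃,…,i_d} + t_{2,2,i₃,…,i_d} = 0. -/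
noncomputable section

/-! A best rank one approximation `a • u₁ ⊗ ⋯ ⊗ u_d` has `a = ⟨T, u⟩` and `|⟨T, x⟩| ≤ |a|` for
all unit `x`. Write `u_l = (cos θ_l, sin θ_l)` and freeze all slots but `j` and `k`: with `M` the
(symmetric, by symmetry of `T`) slice matrix, the pairing becomes
`(tr M / 2) cos (θ_j - θ_k) + F (θ_j + θ_k)`. If `u_j` and `u_k` are not parallel, maximality forces
`tr M = 0`, so the counter-rotation `(θ_j + t, θ_k - t)` yields maximizers again. Nonsymmetry of the
approximation provides such a pair, which we move to the slots `0, 1` by symmetry of `T`. Such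
counter-rotations bring every other slot to any prescribed basis vector while keeping slots
`0, 1` non-parallel, and the vanishing trace there is the claim. -/

open Real Function Finset

def angleVec (θ : ℝ) : Fin 2 → ℝ := ![cos θ, sin θ]

lemma isUnitVec_angleVec (θ : ℝ) : isUnitVec (angleVec θ) := by
  simp [isUnitVec, Fin.sum_univ_two, angleVec]

lemma exists_angleVec_eq {v : Fin 2 → ℝ} (hv : isUnitVec v) : ∃ θ, angleVec θ = v := by
  have hv' : v 0 ^ 2 + v 1 ^ 2 = 1 := by simpa [isUnitVec, Fin.sum_univ_two] using hv
  set z : ℂ := ⟨v 0, v 1⟩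
  have hz : ‖z‖ = 1 := by
    rw [Complex.norm_def, Complex.normSq_apply, ← Real.sqrt_one]
    congr 1
    linear_combination hv'
  have hz0 : z ≠ 0 := norm_ne_zero_iff.mp (by rw [hz]; exact one_ne_zero)
  refine ⟨z.arg, funext fun i => ?_⟩
  fin_cases i
  · simp [angleVec, Complex.cos_arg hz0, hz, z]
  · simp [angleVec, Complex.sin_arg, hz, z]

lemma angleVec_natCast_mul_pi_div_two (i : Fin 2) :
    angleVec ((i : ℝ) * (π / 2)) = Pi.single i 1 := by
  fin_cases i <;> ext i' <;> fin_cases i' <;> simp [angleVec]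

lemma angleVec_eq_cos_sub_smul {α β : ℝ} (h : sin (α - β) = 0) :
    angleVec α = cos (α - β) • angleVec β := by
  ext i
  fin_cases i
  · simpa [angleVec, h] using cos_add (α - β) β
  · simpa [angleVec, h, mul_comm] using sin_add (α - β) β

/-- The pairing `(α, β) ↦ ⟨M (cos α, sin α), (cos β, sin β)⟩` of a symmetric matrix
`M = [[A, B], [B, C]]`. -/
def angleForm (A B C α β : ℝ) : ℝ :=
  A * (cos α * cos β) + B * sin (α + β) + C * (sin α * sin β)

lemma angleForm_eq (A B C α β : ℝ) :
    angleForm A B C α β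
      = (A + C) / 2 * cos (α - β) + ((A - C) / 2 * cos (α + β) + B * sin (α + β)) := by
  rw [angleForm, cos_sub, cos_add]
  ring

lemma angleForm_add_sub_of_add_eq_zero {A B C : ℝ} (h : A + C = 0) (α β t : ℝ) :
    angleForm A B C (α + t) (β - t) = angleForm A B C α β := by
  rw [angleForm_eq, angleForm_eq, h, add_add_sub_cancel, zero_div, zero_mul, zero_mul]

/-- Write the form as `p cos (α - β) + K (α + β)` with `p = (A + C) / 2`. Along the line
`α + β = const`, the value `a` is a strict convex combination of the values `K ± p` at
`α - β = 0, π`, which are bounded by `|a|`; hence `p = 0`. -/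
lemma add_eq_zero_of_angleForm_sq_le {A B C a α β : ℝ}
    (hle : ∀ α' β', angleForm A B C α' β' ^ 2 ≤ a ^ 2) (heq : angleForm A B C α β = a)
    (hs : sin (α - β) ≠ 0) : A + C = 0 := by
  have hzero := hle (α - (α - β) / 2) (β + (α - β) / 2)
  have hpi := hle (α + (π - (α - β)) / 2) (β - (π - (α - β)) / 2)
  rw [angleForm_eq, show α - (α - β) / 2 - (β + (α - β) / 2) = 0 by ring,
    show α - (α - β) / 2 + (β + (α - β) / 2) = α + β by ring, cos_zero] at hzero
  rw [angleForm_eq, show α + (π - (α - β)) / 2 - (β - (π - (α - β)) / 2) = π by ring,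
    show α + (π - (α - β)) / 2 + (β - (π - (α - β)) / 2) = α + β by ring, cos_pi] at hpi
  rw [angleForm_eq] at heq
  set p := (A + C) / 2 with hp_def
  set K := (A - C) / 2 * cos (α + β) + B * sin (α + β)
  rw [← heq] at hzero hpi
  have hp : p ^ 2 * sin (α - β) ^ 2 ≤ 0 := by
    nlinarith [mul_nonneg (neg_le_iff_add_nonneg.1 (neg_one_le_cos (α - β))) (sub_nonneg.2 hzero),
      mul_nonneg (sub_nonneg.2 (cos_le_one (α - β))) (sub_nonneg.2 hpi), sin_sq_add_cos_sq (α - β)]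
  have hp0 : p ^ 2 ≤ 0 := nonpos_of_mul_nonpos_left hp (by positivity)
  have : p = 0 := pow_eq_zero_iff two_ne_zero |>.mp (le_antisymm hp0 (sq_nonneg p))
  linarith

lemma exists_sin_sub_ne_zero_and_sin_add_two_mul_ne_zero (x y : ℝ) :
    ∃ δ, sin (x - δ) ≠ 0 ∧ sin (y + 2 * δ) ≠ 0 := by
  by_contra! h
  have hcover : (Set.univ : Set ℝ) ⊆
      Set.range (fun n : ℤ => x - n * π) ∪ Set.range (fun n : ℤ => (n * π - y) / 2) := by
    intro δ _
    by_cases hx : sin (x - δ) = 0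
    · obtain ⟨n, hn⟩ := sin_eq_zero_iff.mp hx
      exact Or.inl ⟨n, by linarith⟩
    · obtain ⟨n, hn⟩ := sin_eq_zero_iff.mp (h δ hx)
      exact Or.inr ⟨n, by linarith⟩
  exact Cardinal.not_countable_real
    (((Set.countable_range _).union (Set.countable_range _)).mono hcover)

section Tensor

variable {ι : Type*} [Fintype ι]

lemma dtens_smul {n : ι → ℕ} (c : ι → ℝ) (x : ∀ j, Fin (n j) → ℝ) :
    dtens (fun j => c j • x j) = (∏ j, c j) • dtens x := by
  ext idx
  simp [dtens, Finset.prod_mul_distrib]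

lemma dtens_angleVec_eq_smul_of_sin_sub_eq_zero {θ : ι → ℝ} {j₀ : ι}
    (h : ∀ j, sin (θ j - θ j₀) = 0) :
    dtens (angleVec ∘ θ) = (∏ j, cos (θ j - θ j₀)) • dtens fun _ : ι => angleVec (θ j₀) := by
  rw [← dtens_smul]
  exact congrArg dtens (funext fun j => angleVec_eq_cos_sub_smul (h j))

variable [DecidableEq ι]

lemma sum_dtens_sq {n : ι → ℕ} {x : ∀ j, Fin (n j) → ℝ} (hx : ∀ j, isUnitVec (x j)) :
    ∑ idx, dtens x idx ^ 2 = 1 := by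
  simp_rw [dtens, ← Finset.prod_pow]
  rw [← Fintype.prod_sum fun j c => x j c ^ 2]
  exact Finset.prod_eq_one fun j _ => hx j

lemma sum_sub_smul_sq {n : ι → ℕ} (T X : (∀ j, Fin (n j)) → ℝ) (s : ℝ) :
    ∑ idx, (T - s • X) idx ^ 2
      = ∑ idx, T idx ^ 2 - 2 * s * tinner T X + s ^ 2 * ∑ idx, X idx ^ 2 := by
  simp only [tinner, Finset.mul_sum, ← Finset.sum_sub_distrib, ← Finset.sum_add_distrib]
  refine Finset.sum_congr rfl fun idx _ => ?_
  simp only [Pi.sub_apply, Pi.smul_apply, smul_eq_mul]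
  ring

lemma sq_hsNorm_sub_smul_dtens {n : ι → ℕ} (T : (∀ j, Fin (n j)) → ℝ) (s : ℝ)
    {x : ∀ j, Fin (n j) → ℝ} (hx : ∀ j, isUnitVec (x j)) :
    hsNorm (T - s • dtens x) ^ 2 = ∑ idx, T idx ^ 2 - 2 * s * tinner T (dtens x) + s ^ 2 := by
  rw [hsNorm, Real.sq_sqrt (Finset.sum_nonneg fun _ _ => sq_nonneg _), sum_sub_smul_sq,
    sum_dtens_sq hx, mul_one]

/-- Minimizing `‖T‖² - 2 s ⟨T, x⟩ + s²` over `s` leaves `‖T‖² - ⟨T, x⟩²`. -/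
lemma tinner_dtens_eq_and_sq_le_of_isBest {n : ι → ℕ} {T : (∀ j, Fin (n j)) → ℝ} {a : ℝ}
    {u : ∀ j, Fin (n j) → ℝ} (hu : ∀ j, isUnitVec (u j))
    (hbest : ∀ (s : ℝ) (x : ∀ j, Fin (n j) → ℝ), (∀ j, isUnitVec (x j)) →
      hsNorm (T - a • dtens u) ≤ hsNorm (T - s • dtens x)) :
    tinner T (dtens u) = a ∧
      ∀ x : ∀ j, Fin (n j) → ℝ, (∀ j, isUnitVec (x j)) → tinner T (dtens x) ^ 2 ≤ a ^ 2 := by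
  have hsq : ∀ s x, (∀ j, isUnitVec (x j)) →
      ∑ idx, T idx ^ 2 - 2 * a * tinner T (dtens u) + a ^ 2
        ≤ ∑ idx, T idx ^ 2 - 2 * s * tinner T (dtens x) + s ^ 2 := by
    intro s x hx
    rw [← sq_hsNorm_sub_smul_dtens T a hu, ← sq_hsNorm_sub_smul_dtens T s hx]
    exact pow_le_pow_left₀ (Real.sqrt_nonneg _) (hbest s x hx) 2
  have hau : tinner T (dtens u) = a := by
    nlinarith [hsq (tinner T (dtens u)) u hu, sq_nonneg (a - tinner T (dtens u))]
  refine ⟨hau, fun x hx => ?_⟩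
  have hx' := hsq (tinner T (dtens x)) x hx
  rw [hau] at hx'
  linarith

lemma tinner_dtens_single {n : ι → ℕ} (T : (∀ j, Fin (n j)) → ℝ) (g : ∀ j, Fin (n j)) :
    tinner T (dtens fun j => Pi.single (g j) 1) = T g := by
  have hdtens : dtens (fun j => (Pi.single (g j) 1 : Fin (n j) → ℝ)) = Pi.single g 1 := by
    ext idx
    by_cases h : idx = g
    · subst h; simp [dtens]
    · obtain ⟨j, hj⟩ := Function.ne_iff.mp h
      rw [Pi.single_apply, if_neg h, dtens]
      exact Finset.prod_eq_zero (Finset.mem_univ j) (by simp [hj])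
  simp [tinner, hdtens, Pi.single_apply]

lemma tinner_dtens_update_s15 {n : ι → ℕ} (T : (∀ j, Fin (n j)) → ℝ) (x : ∀ j, Fin (n j) → ℝ)
    (j : ι) (v : Fin (n j) → ℝ) :
    tinner T (dtens (update x j v))
      = ∑ i, v i * tinner T (dtens (update x j (Pi.single i 1))) := by
  have hdtens : ∀ (w : Fin (n j) → ℝ) idx,
      dtens (update x j w) idx = w (idx j) * ∏ l ∈ univ.erase j, x l (idx l) := by
    intro w idx
    rw [dtens, ← Finset.mul_prod_erase _ _ (Finset.mem_univ j), update_self]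
    congr 1
    exact Finset.prod_congr rfl fun l hl => by rw [update_of_ne (Finset.ne_of_mem_erase hl)]
  simp only [tinner, Finset.mul_sum, hdtens]
  rw [Finset.sum_comm]
  refine Finset.sum_congr rfl fun idx _ => ?_
  simp only [Pi.single_apply, ite_mul, one_mul, zero_mul, mul_ite, mul_zero, sum_ite_eq, mem_univ,
    if_true]
  ring

lemma tinner_dtens_comp_perm {m : ℕ} {T : (ι → Fin m) → ℝ}
    (hsym : ∀ (σ : Equiv.Perm ι) (idx : ι → Fin m), T (idx ∘ σ) = T idx)
    (σ : Equiv.Perm ι) (x : ι → Fin m → ℝ) :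
    tinner T (dtens (x ∘ σ)) = tinner T (dtens x) := by
  have hdtens : ∀ idx : ι → Fin m, dtens (x ∘ σ) (idx ∘ σ) = dtens x idx := fun idx =>
    Equiv.prod_comp σ fun l => x l (idx l)
  rw [tinner, tinner, ← (Equiv.arrowCongr σ.symm (Equiv.refl (Fin m))).sum_comp]
  refine Finset.sum_congr rfl fun idx _ => ?_
  have hidx : Equiv.arrowCongr σ.symm (Equiv.refl (Fin m)) idx = idx ∘ σ := by
    ext l; simp
  rw [hidx, hsym, hdtens]

/-- The matrix obtained from `T` by contracting every slot except `j` and `k` with `x`. -/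
def pairSlice {m : ℕ} (T : (ι → Fin m) → ℝ) (x : ι → Fin m → ℝ) (j k : ι) (i i' : Fin m) : ℝ :=
  tinner T (dtens (update (update x j (Pi.single i 1)) k (Pi.single i' 1)))

lemma tinner_dtens_update_update {m : ℕ} (T : (ι → Fin m) → ℝ) (x : ι → Fin m → ℝ) {j k : ι}
    (hjk : j ≠ k) (v w : Fin m → ℝ) :
    tinner T (dtens (update (update x j v) k w))
      = ∑ i, ∑ i', v i * w i' * pairSlice T x j k i i' := by
  rw [tinner_dtens_update_s15, Finset.sum_comm]
  refine Finset.sum_congr rfl fun i' _ => ?_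
  rw [update_comm hjk, tinner_dtens_update_s15, Finset.mul_sum]
  refine Finset.sum_congr rfl fun i _ => ?_
  rw [pairSlice, update_comm hjk]
  ring

lemma pairSlice_comm {m : ℕ} {T : (ι → Fin m) → ℝ}
    (hsym : ∀ (σ : Equiv.Perm ι) (idx : ι → Fin m), T (idx ∘ σ) = T idx)
    (x : ι → Fin m → ℝ) {j k : ι} (hjk : j ≠ k) (i i' : Fin m) :
    pairSlice T x j k i i' = pairSlice T x j k i' i := by
  rw [pairSlice, pairSlice, ← tinner_dtens_comp_perm hsym (Equiv.swap j k)]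
  congr 2
  ext l
  simp only [comp_apply, update_apply, Equiv.swap_apply_def]
  split_ifs <;> simp_all

lemma pairSlice_eq_apply {m : ℕ} (T : (ι → Fin m) → ℝ) {x : ι → Fin m → ℝ} {g : ι → Fin m}
    {j k : ι} (hx : ∀ l, l ≠ j → l ≠ k → x l = Pi.single (g l) 1) (i i' : Fin m) :
    pairSlice T x j k i i' = T (update (update g j i) k i') := by
  rw [pairSlice, ← tinner_dtens_single T (update (update g j i) k i')]
  congr 2
  ext l : 1
  simp only [update_apply]
  split_ifs with hk hj
  · rfl
  · rfl
  · exact hx l hj hk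

lemma tinner_dtens_update_update_angleVec {T : (ι → Fin 2) → ℝ}
    (hsym : ∀ (σ : Equiv.Perm ι) (idx : ι → Fin 2), T (idx ∘ σ) = T idx)
    (x : ι → Fin 2 → ℝ) {j k : ι} (hjk : j ≠ k) (α β : ℝ) :
    tinner T (dtens (update (update x j (angleVec α)) k (angleVec β)))
      = angleForm (pairSlice T x j k 0 0) (pairSlice T x j k 0 1) (pairSlice T x j k 1 1) α β := by
  rw [tinner_dtens_update_update T x hjk]
  simp only [Fin.sum_univ_two]
  rw [pairSlice_comm hsym x hjk 1 0]
  simp only [angleForm, angleVec, sin_add, Matrix.cons_val_zero, Matrix.cons_val_one,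
    Matrix.cons_val_fin_one]
  ring

lemma tinner_dtens_angleVec_update_update {T : (ι → Fin 2) → ℝ}
    (hsym : ∀ (σ : Equiv.Perm ι) (idx : ι → Fin 2), T (idx ∘ σ) = T idx)
    (θ : ι → ℝ) {j k : ι} (hjk : j ≠ k) (α β : ℝ) :
    tinner T (dtens (angleVec ∘ update (update θ j α) k β))
      = angleForm (pairSlice T (angleVec ∘ θ) j k 0 0) (pairSlice T (angleVec ∘ θ) j k 0 1)
          (pairSlice T (angleVec ∘ θ) j k 1 1) α β := by
  rw [comp_update, comp_update, tinner_dtens_update_update_angleVec hsym _ hjk]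

lemma pairSlice_trace_eq_zero {T : (ι → Fin 2) → ℝ} {a : ℝ}
    (hsym : ∀ (σ : Equiv.Perm ι) (idx : ι → Fin 2), T (idx ∘ σ) = T idx)
    (hmax : ∀ x : ι → Fin 2 → ℝ, (∀ j, isUnitVec (x j)) → tinner T (dtens x) ^ 2 ≤ a ^ 2)
    {θ : ι → ℝ} (hθ : tinner T (dtens (angleVec ∘ θ)) = a) {j k : ι} (hjk : j ≠ k)
    (hs : sin (θ j - θ k) ≠ 0) :
    pairSlice T (angleVec ∘ θ) j k 0 0 + pairSlice T (angleVec ∘ θ) j k 1 1 = 0 := by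
  refine add_eq_zero_of_angleForm_sq_le (B := pairSlice T (angleVec ∘ θ) j k 0 1) (a := a)
    (fun α β => ?_) ?_ hs
  · rw [← tinner_dtens_angleVec_update_update hsym θ hjk]
    exact hmax _ fun l => isUnitVec_angleVec _
  · rw [← tinner_dtens_angleVec_update_update hsym θ hjk, update_eq_self, update_eq_self, hθ]

lemma tinner_dtens_angleVec_rotate {T : (ι → Fin 2) → ℝ} {a : ℝ}
    (hsym : ∀ (σ : Equiv.Perm ι) (idx : ι → Fin 2), T (idx ∘ σ) = T idx)
    (hmax : ∀ x : ι → Fin 2 → ℝ, (∀ j, isUnitVec (x j)) → tinner T (dtens x) ^ 2 ≤ a ^ 2)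
    {θ : ι → ℝ} (hθ : tinner T (dtens (angleVec ∘ θ)) = a) {j k : ι} (hjk : j ≠ k)
    (hs : sin (θ j - θ k) ≠ 0) (t : ℝ) :
    tinner T (dtens (angleVec ∘ update (update θ j (θ j + t)) k (θ k - t))) = a := by
  rw [tinner_dtens_angleVec_update_update hsym θ hjk,
    angleForm_add_sub_of_add_eq_zero (pairSlice_trace_eq_zero hsym hmax hθ hjk hs),
    ← tinner_dtens_angleVec_update_update hsym θ hjk, update_eq_self, update_eq_self, hθ]

/-- One slot `l` of a maximizing configuration with non-parallel slots `j`, `k` can be moved to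
any angle: first counter-rotate `j, k` so that `l` is not parallel to `j` and stays so after
the second move, then counter-rotate `l, j`. -/
lemma exists_angle_update_of_sin_ne_zero {T : (ι → Fin 2) → ℝ} {a : ℝ}
    (hsym : ∀ (σ : Equiv.Perm ι) (idx : ι → Fin 2), T (idx ∘ σ) = T idx)
    (hmax : ∀ x : ι → Fin 2 → ℝ, (∀ j, isUnitVec (x j)) → tinner T (dtens x) ^ 2 ≤ a ^ 2)
    {θ : ι → ℝ} (hθ : tinner T (dtens (angleVec ∘ θ)) = a) {j k l : ι} (hjk : j ≠ k)
    (hlj : l ≠ j) (hlk : l ≠ k) (hs : sin (θ j - θ k) ≠ 0) (τ : ℝ) :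
    ∃ θ' : ι → ℝ, tinner T (dtens (angleVec ∘ θ')) = a ∧ sin (θ' j - θ' k) ≠ 0 ∧
      θ' l = τ ∧ ∀ m, m ≠ j → m ≠ k → m ≠ l → θ' m = θ m := by
  set t := τ - θ l
  obtain ⟨δ, hδl, hδjk⟩ :=
    exists_sin_sub_ne_zero_and_sin_add_two_mul_ne_zero (θ l - θ j) (θ j - t - θ k)
  set θ₁ := update (update θ j (θ j + δ)) k (θ k - δ)
  have hθ₁j : θ₁ j = θ j + δ := by simp [θ₁, hjk]
  have hθ₁k : θ₁ k = θ k - δ := by simp [θ₁]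
  have hθ₁l : θ₁ l = θ l := by simp [θ₁, hlj, hlk]
  have hs₁ : sin (θ₁ l - θ₁ j) ≠ 0 := by
    rwa [hθ₁j, hθ₁l, ← sub_sub]
  refine ⟨update (update θ₁ l (θ₁ l + t)) j (θ₁ j - t),
    tinner_dtens_angleVec_rotate hsym hmax (tinner_dtens_angleVec_rotate hsym hmax hθ hjk hs δ)
      hlj hs₁ t, ?_, ?_, fun m hmj hmk hml => ?_⟩
  · rw [update_self, update_of_ne hjk.symm, update_of_ne hlk.symm, hθ₁j, hθ₁k]
    convert hδjk using 2
    ring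
  · simp [θ₁, hlj, hlk, t]
  · simp [θ₁, hmj, hmk, hml]

lemma exists_angles_eq_on_of_sin_ne_zero {T : (ι → Fin 2) → ℝ} {a : ℝ}
    (hsym : ∀ (σ : Equiv.Perm ι) (idx : ι → Fin 2), T (idx ∘ σ) = T idx)
    (hmax : ∀ x : ι → Fin 2 → ℝ, (∀ j, isUnitVec (x j)) → tinner T (dtens x) ^ 2 ≤ a ^ 2)
    {j k : ι} (hjk : j ≠ k) (τ : ι → ℝ) (S : Finset ι) (hjS : j ∉ S) (hkS : k ∉ S)
    {θ : ι → ℝ} (hθ : tinner T (dtens (angleVec ∘ θ)) = a) (hs : sin (θ j - θ k) ≠ 0) :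
    ∃ θ' : ι → ℝ, tinner T (dtens (angleVec ∘ θ')) = a ∧ sin (θ' j - θ' k) ≠ 0 ∧
      ∀ l ∈ S, θ' l = τ l := by
  induction S using Finset.induction_on with
  | empty => exact ⟨θ, hθ, hs, by simp⟩
  | insert l S hlS ih =>
    simp only [Finset.mem_insert, not_or] at hjS hkS
    obtain ⟨θ₁, hθ₁, hs₁, hθ₁S⟩ := ih hjS.2 hkS.2
    obtain ⟨θ₂, hθ₂, hs₂, hθ₂l, hθ₂m⟩ := exists_angle_update_of_sin_ne_zero hsym hmax hθ₁ hjk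
      (Ne.symm hjS.1) (Ne.symm hkS.1) hs₁ (τ l)
    refine ⟨θ₂, hθ₂, hs₂, ?_⟩
    simp only [Finset.mem_insert, forall_eq_or_imp]
    refine ⟨hθ₂l, fun m hm => ?_⟩
    rw [hθ₂m m (ne_of_mem_of_not_mem hm hjS.2) (ne_of_mem_of_not_mem hm hkS.2)
      (ne_of_mem_of_not_mem hm hlS), hθ₁S m hm]

end Tensor

theorem stmt15_general {d : ℕ} (T : (Fin (d + 2) → Fin 2) → ℝ)
    (hsym : ∀ (σ : Equiv.Perm (Fin (d + 2))) (idx : Fin (d + 2) → Fin 2),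
      T (idx ∘ σ) = T idx)
    (hns : ∃ (a : ℝ) (u : Fin (d + 2) → Fin 2 → ℝ), (∀ j, isUnitVec (u j)) ∧
      (∀ (s : ℝ) (x : Fin (d + 2) → Fin 2 → ℝ), (∀ j, isUnitVec (x j)) →
        hsNorm (T - a • dtens u) ≤ hsNorm (T - s • dtens x)) ∧
      ¬ ∃ (c : ℝ) (v : Fin 2 → ℝ), a • dtens u = c • dtens (fun _ : Fin (d + 2) => v)) :
    ∀ g : Fin (d + 2) → Fin 2,
      T (Function.update (Function.update g 0 0) 1 0) +
        T (Function.update (Function.update g 0 1) 1 1) = 0 := by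
  intro g
  obtain ⟨a, u, hu, hbest, hnsym⟩ := hns
  obtain ⟨hau, hmax⟩ := tinner_dtens_eq_and_sq_le_of_isBest hu hbest
  choose θ hθ using fun j => exists_angleVec_eq (hu j)
  have hθu : angleVec ∘ θ = u := funext hθ
  obtain ⟨j, k, hjk⟩ : ∃ j k, sin (θ j - θ k) ≠ 0 := by
    by_contra! h
    refine hnsym ⟨a * ∏ j, cos (θ j - θ 0), angleVec (θ 0), ?_⟩
    rw [← hθu, dtens_angleVec_eq_smul_of_sin_sub_eq_zero (h · 0), smul_smul]
  have h01 : (0 : Fin (d + 2)) ≠ 1 := by simp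
  have hjk' : j ≠ k := fun h => hjk (by rw [h, sub_self, sin_zero])
  obtain ⟨σ, hσ⟩ := Equiv.Perm.exists_extending_pair _ _ (Embedding.embFinTwo h01).injective
    (Embedding.embFinTwo hjk').injective
  have hσ0 : σ 0 = j := hσ 0
  have hσ1 : σ 1 = k := hσ 1
  have hθσ : tinner T (dtens (angleVec ∘ (θ ∘ σ))) = a := by
    rw [← comp_assoc, tinner_dtens_comp_perm hsym, hθu, hau]
  obtain ⟨θ', hθ', hs', hθ'S⟩ := exists_angles_eq_on_of_sin_ne_zero hsym hmax h01
    (fun l => (g l : ℝ) * (π / 2)) (univ \ {0, 1}) (by simp) (by simp) hθσ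
    (by simpa [hσ0, hσ1] using hjk)
  have hθ'g : ∀ l, l ≠ 0 → l ≠ 1 → (angleVec ∘ θ') l = Pi.single (g l) 1 := fun l hl0 hl1 => by
    simp [hθ'S l (by simp [hl0, hl1]), angleVec_natCast_mul_pi_div_two]
  simpa [pairSlice_eq_apply T hθ'g] using pairSlice_trace_eq_zero hsym hmax hθ' h01 hs'

/-- If a nonzero symmetric tensor `T ∈ Sym(2, d)` (`d ≥ 2`) has a nonsymmetric best rank
one approximation, then every 2×2 slice `[t_{i,j,i₃,…,i_d}]` obtained by fixing the last
`d - 2` indices has zero trace. -/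
theorem stmt15 {d : ℕ} (T : (Fin (d + 2) → Fin 2) → ℝ) (hT : T ≠ 0)
    (hsym : ∀ (σ : Equiv.Perm (Fin (d + 2))) (idx : Fin (d + 2) → Fin 2),
      T (idx ∘ σ) = T idx)
    (hns : ∃ (a : ℝ) (u : Fin (d + 2) → Fin 2 → ℝ), (∀ j, isUnitVec (u j)) ∧
      (∀ (s : ℝ) (x : Fin (d + 2) → Fin 2 → ℝ), (∀ j, isUnitVec (x j)) →
        hsNorm (T - a • dtens u) ≤ hsNorm (T - s • dtens x)) ∧
      ¬ ∃ (c : ℝ) (v : Fin 2 → ℝ), a • dtens u = c • dtens (fun _ : Fin (d + 2) => v)) :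
    ∀ g : Fin (d + 2) → Fin 2,
      T (Function.update (Function.update g 0 0) 1 0) +
        T (Function.update (Function.update g 0 1) 1 1) = 0 :=
  stmt15_general T hsym hns
end
end
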